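/- arXiv:2201.00481 — 10 statements merged into one kernel-verified Lean document; each statement's English description precedes it below -/
import Mathlib

section
/- Let α ∈ [0,1), λ > 0, p > 0, and let Y be a nonnegative random variable with cumulative distribution function F_Y. Let R : [0,∞) → [0,∞) be a Borel-measurable function, and suppose J > 0 satisfies λ ∫₀^∞ e^{J R(y)} dF_Y(y) = λ + J p. Define ψ₀ : ℝ × [0,∞) → ℝ by ψ₀(x,m) = 1 if x < αm and ψ₀(x,m) = 0 otherwise, and recursively define ψ_k(x,m) = ∫₀^∞ ∫₀^∞ ψ_{k−1}(x + p t − R(y), m) dF_Y(y) · λ e^{−λt} dt for k ≥ 1. Then for every k ≥ 0 and every (x,m) with m ≥ 0 and αm ≤ x, one has ψ_k(x,m) ≤ e^{−J(x − αm)}. -/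
/-!
The Lundberg exponent `J` is chosen so that `x ↦ e^{-J(x - a)}` is invariant under one step of
the claim recursion: the drift until the next claim contributes the factor
`λ / (λ + J p)` and the claim itself the factor `E[e^{J R(Y)}] = (λ + J p) / λ`. Since the
recursion is monotone on nonnegative functions and the indicator `ψ₀(·, m)` lies below
`e^{-J(x - αm)}` for every `x`, the bound propagates to all `ψ_k` by induction.
-/

open MeasureTheory Real Set

section ClaimOperator

variable (p lam : ℝ) (ν : Measure ℝ) (R : ℝ → ℝ)

/-- The step `ψ_k(·, m) ↦ ψ_{k+1}(·, m)`: condition on the first claim, which arrives after an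
`Exp(λ)` time `t` and costs `R(Y)`. -/
noncomputable def claimOperator (f : ℝ → ℝ) (x : ℝ) : ℝ :=
  ∫ t in Ioi (0 : ℝ), (∫ y, f (x + p * t - R y) ∂ν) * (lam * exp (-lam * t))

variable {p lam ν R}

theorem claimOperator_nonneg (hlam : 0 ≤ lam) {f : ℝ → ℝ} (hf : ∀ x, 0 ≤ f x) (x : ℝ) :
    0 ≤ claimOperator p lam ν R f x :=
  integral_nonneg fun _ ↦
    mul_nonneg (integral_nonneg fun _ ↦ hf _) (mul_nonneg hlam (exp_nonneg _))

theorem integrable_exp_of_mul_integral_eq {J : ℝ} (hc : lam + J * p ≠ 0)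
    (hJeq : lam * ∫ y, exp (J * R y) ∂ν = lam + J * p) :
    Integrable (fun y ↦ exp (J * R y)) ν := by
  by_contra h
  rw [integral_undef h, mul_zero] at hJeq
  exact hc hJeq.symm

theorem integral_comp_sub_le_exp {J a : ℝ} (hE : Integrable (fun y ↦ exp (J * R y)) ν)
    {f : ℝ → ℝ} (hf0 : ∀ x, 0 ≤ f x) (hf : ∀ x, f x ≤ exp (-(J * (x - a)))) (z : ℝ) :
    ∫ y, f (z - R y) ∂ν ≤ exp (-(J * (z - a))) * ∫ y, exp (J * R y) ∂ν := by
  rw [← integral_const_mul]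
  refine integral_mono_of_nonneg (.of_forall fun _ ↦ hf0 _) (hE.const_mul _)
    (.of_forall fun y ↦ (hf _).trans_eq ?_)
  dsimp only
  rw [← exp_add]
  ring_nf

theorem claimOperator_le_exp {J a : ℝ} (hlam : 0 < lam) (hc : 0 < lam + J * p)
    (hJeq : lam * ∫ y, exp (J * R y) ∂ν = lam + J * p)
    {f : ℝ → ℝ} (hf0 : ∀ x, 0 ≤ f x) (hf : ∀ x, f x ≤ exp (-(J * (x - a)))) (x : ℝ) :
    claimOperator p lam ν R f x ≤ exp (-(J * (x - a))) := by
  set E := ∫ y, exp (J * R y) ∂ν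
  have hE := integrable_exp_of_mul_integral_eq hc.ne' hJeq
  have hdensity : ∀ t, exp (-(J * (x + p * t - a))) * E * (lam * exp (-lam * t))
      = exp (-(J * (x - a))) * E * lam * exp (-(lam + J * p) * t) := by
    intro t
    rw [show -(J * (x + p * t - a)) = -(J * (x - a)) + -(J * p * t) by ring,
      show -(lam + J * p) * t = -(J * p * t) + -lam * t by ring, exp_add, exp_add]
    ring
  calc claimOperator p lam ν R f x
      ≤ ∫ t in Ioi (0 : ℝ), exp (-(J * (x - a))) * E * lam * exp (-(lam + J * p) * t) := by
        refine integral_mono_of_nonneg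
          (.of_forall fun _ ↦ mul_nonneg (integral_nonneg fun _ ↦ hf0 _)
            (mul_nonneg hlam.le (exp_nonneg _)))
          ((integrableOn_exp_mul_Ioi (by linarith) 0).const_mul _)
          (.of_forall fun t ↦ ?_)
        dsimp only
        rw [← hdensity]
        exact mul_le_mul_of_nonneg_right (integral_comp_sub_le_exp hE hf0 hf _)
          (mul_nonneg hlam.le (exp_nonneg _))
    _ = exp (-(J * (x - a))) * (lam * E / (lam + J * p)) := by
        rw [integral_const_mul, integral_exp_mul_Ioi (by linarith), mul_zero, exp_zero]
        field_simp
    _ = exp (-(J * (x - a))) := by rw [hJeq, div_self hc.ne', mul_one]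

end ClaimOperator

theorem indicator_lt_le_exp {J : ℝ} (hJ : 0 ≤ J) (b x : ℝ) :
    (if x < b then 1 else 0) ≤ exp (-(J * (x - b))) := by
  split_ifs with h
  · exact one_le_exp (by nlinarith)
  · exact (exp_pos _).le

theorem psi_k_exponential_bound_general
    (α lam p : ℝ) (hlam : 0 < lam) (hp : 0 < p)
    (ν : Measure ℝ)
    (R : ℝ → ℝ)
    (J : ℝ) (hJ : 0 < J)
    (hJeq : lam * ∫ y, Real.exp (J * R y) ∂ν = lam + J * p)
    (ψ : ℕ → ℝ → ℝ → ℝ)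
    (hψ0 : ∀ x m : ℝ, ψ 0 x m = if x < α * m then 1 else 0)
    (hψrec : ∀ k : ℕ, ∀ x m : ℝ, ψ (k + 1) x m
        = ∫ t in Set.Ioi (0 : ℝ),
            (∫ y, ψ k (x + p * t - R y) m ∂ν) * (lam * Real.exp (-lam * t))) :
    ∀ k : ℕ, ∀ x m : ℝ, 0 ≤ m → α * m ≤ x →
      ψ k x m ≤ Real.exp (-(J * (x - α * m))) := by
  have hc : 0 < lam + J * p := by positivity
  have hψ_nonneg : ∀ k x m, 0 ≤ ψ k x m := by
    intro k
    induction k with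
    | zero => intro x m; rw [hψ0]; positivity
    | succ k ih => intro x m; rw [hψrec]; exact claimOperator_nonneg hlam.le (ih · m) x
  suffices ∀ k x m, ψ k x m ≤ exp (-(J * (x - α * m))) from fun k x m _ _ ↦ this k x m
  intro k x m
  induction k generalizing x with
  | zero => rw [hψ0]; exact indicator_lt_le_exp hJ.le _ x
  | succ k ih =>
    rw [hψrec]
    exact claimOperator_le_exp hlam hc hJeq (hψ_nonneg k · m) ih x

/-- Exponential bound for the probability of drawdown at or before the `k`-th claim in the
Cramér–Lundberg model: if `J > 0` satisfies `λ E[e^{J R(Y)}] = λ + J p`, then the recursively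
defined functions `ψ_k` satisfy `ψ_k(x,m) ≤ e^{−J(x − αm)}` on the region `0 ≤ m`, `αm ≤ x`. -/
theorem psi_k_exponential_bound
    (α lam p : ℝ) (hα0 : 0 ≤ α) (hα1 : α < 1) (hlam : 0 < lam) (hp : 0 < p)
    (ν : Measure ℝ) [IsProbabilityMeasure ν] (hν : ν (Set.Iio 0) = 0)
    (R : ℝ → ℝ) (hRmeas : Measurable R) (hRnonneg : ∀ y, 0 ≤ R y)
    (J : ℝ) (hJ : 0 < J)
    (hJeq : lam * ∫ y, Real.exp (J * R y) ∂ν = lam + J * p)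
    (ψ : ℕ → ℝ → ℝ → ℝ)
    (hψ0 : ∀ x m : ℝ, ψ 0 x m = if x < α * m then 1 else 0)
    (hψrec : ∀ k : ℕ, ∀ x m : ℝ, ψ (k + 1) x m
        = ∫ t in Set.Ioi (0 : ℝ),
            (∫ y, ψ k (x + p * t - R y) m ∂ν) * (lam * Real.exp (-lam * t))) :
    ∀ k : ℕ, ∀ x m : ℝ, 0 ≤ m → α * m ≤ x →
      ψ k x m ≤ Real.exp (-(J * (x - α * m))) :=
  psi_k_exponential_bound_general α lam p hlam hp ν R J hJ hJeq ψ hψ0 hψrec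
end

section
/- Let Y be a nonnegative random variable with E[Y] > 0 and E[Y²] < ∞, with survival function S_Y(y) = P(Y > y), and let λ > 0, θ ≥ 0, η > 0, and c satisfy λE[Y] < c < (1+θ)λE[Y] + (η/2)λE[Y²]. Then there exists a unique ρ > 0 solving c − λE[Y] = λρ ∫₀^∞ min((θ + ηy)/(ρ + η), y) S_Y(y) dy. -/
/-!
Dividing by `λ`, the equation reads `G ρ = (c - λE[Y]) / λ` with `G ρ = ρ ∫₀^∞ R_ρ(y) S_Y(y) dy`.
For `y > 0`, `ρ R_ρ(y) = min (ρ (θ + ηy) / (ρ + η)) (ρ y)` is strictly increasing in `ρ`, lies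
between `0` and `min (θ + ηy) (ρ y)`, and tends to `θ + ηy`. By the layer-cake formulas
`∫ S_Y = E[Y]` and `∫ y S_Y(y) dy = E[Y²] / 2` these bounds are integrable, so dominated
convergence makes `G` continuous and strictly increasing on `(0, ∞)`, with `G(0+) = 0` and
`G(∞) = θE[Y] + ηE[Y²] / 2`. The hypotheses on `c` put the target strictly between these limits,
so the intermediate value theorem gives exactly one root.
-/

open MeasureTheory Filter Set Topology

namespace MeasureTheory

variable {α : Type*} [MeasurableSpace α] {μ : Measure α} {f : α → ℝ}

theorem measurable_meas_lt : Measurable fun t : ℝ => μ {a | t < f a} :=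
  Antitone.measurable fun _ _ hst => measure_mono fun _ h => hst.trans_lt h

theorem Integrable.integrableOn_meas_lt (hf : Integrable f μ) (f_nn : 0 ≤ᵐ[μ] f) :
    IntegrableOn (fun t => μ.real {a | t < f a}) (Ioi 0) := by
  refine integrable_toReal_of_lintegral_ne_top measurable_meas_lt.aemeasurable ?_
  rw [← lintegral_eq_lintegral_meas_lt μ f_nn hf.aemeasurable]
  exact hf.lintegral_lt_top.ne

theorem lintegral_meas_lt_mul_eq_lintegral_sq_div_two (f_nn : 0 ≤ᵐ[μ] f)
    (f_mble : AEMeasurable f μ) :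
    ∫⁻ t in Ioi 0, μ {a | t < f a} * ENNReal.ofReal t = ∫⁻ a, ENNReal.ofReal (f a ^ 2 / 2) ∂μ := by
  rw [← lintegral_comp_eq_lintegral_meas_lt_mul μ f_nn f_mble (g := fun t => t)
    (fun t _ => continuous_id.intervalIntegrable 0 t)
    (ae_restrict_of_forall_mem measurableSet_Ioi fun t ht => le_of_lt ht)]
  simp [integral_id]

theorem integrableOn_mul_meas_lt_and_integral_eq (f_nn : 0 ≤ᵐ[μ] f) (f_mble : AEMeasurable f μ)
    (hf2 : Integrable (fun a => f a ^ 2) μ) :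
    IntegrableOn (fun t => t * μ.real {a | t < f a}) (Ioi 0) ∧
      ∫ t in Ioi 0, t * μ.real {a | t < f a} = (∫ a, f a ^ 2 ∂μ) / 2 := by
  set F : ℝ → ENNReal := fun t => μ {a | t < f a} * ENNReal.ofReal t
  have hF : AEMeasurable F (volume.restrict (Ioi 0)) :=
    (measurable_meas_lt.mul ENNReal.measurable_ofReal).aemeasurable
  have hF_eq : EqOn (fun t => (F t).toReal) (fun t => t * μ.real {a | t < f a}) (Ioi 0) :=
    fun t ht => by simp [F, ENNReal.toReal_ofReal (le_of_lt ht), measureReal_def, mul_comm]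
  have hF_lint : ∫⁻ t in Ioi 0, F t = ENNReal.ofReal ((∫ a, f a ^ 2 ∂μ) / 2) := by
    rw [lintegral_meas_lt_mul_eq_lintegral_sq_div_two f_nn f_mble, ← integral_div,
      ofReal_integral_eq_lintegral_ofReal (hf2.div_const 2)
        (Eventually.of_forall fun a => by positivity)]
  have hF_fin : ∫⁻ t in Ioi 0, F t ≠ ⊤ := hF_lint ▸ ENNReal.ofReal_ne_top
  refine ⟨IntegrableOn.congr_fun (integrable_toReal_of_lintegral_ne_top hF hF_fin) hF_eq
    measurableSet_Ioi, ?_⟩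
  rw [← setIntegral_congr_fun measurableSet_Ioi hF_eq, integral_toReal hF (ae_lt_top' hF hF_fin),
    hF_lint, ENNReal.toReal_ofReal
      (div_nonneg (integral_nonneg fun a => sq_nonneg (f a)) two_pos.le)]

end MeasureTheory

theorem existsUnique_eq_of_strictMonoOn_Ioi {α δ : Type*} [ConditionallyCompleteLinearOrder α]
    [TopologicalSpace α] [OrderTopology α] [DenselyOrdered α] [NoMaxOrder α]
    [LinearOrder δ] [TopologicalSpace δ] [OrderClosedTopology δ]
    {f : α → δ} {a : α} {l u t : δ} (hc : ContinuousOn f (Ioi a)) (hm : StrictMonoOn f (Ioi a))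
    (hl : Tendsto f (𝓝[>] a) (𝓝 l)) (hu : Tendsto f atTop (𝓝 u)) (ht : t ∈ Ioo l u) :
    ∃! x, a < x ∧ f x = t := by
  obtain ⟨x₁, hx₁, hax₁⟩ := ((hl.eventually (eventually_lt_nhds ht.1)).and
    self_mem_nhdsWithin).exists
  obtain ⟨x₂, hx₂, hx₁₂⟩ := ((hu.eventually (eventually_gt_nhds ht.2)).and
    (eventually_ge_atTop x₁)).exists
  obtain ⟨x, hx, hfx⟩ := intermediate_value_Icc hx₁₂
    (hc.mono fun y hy => lt_of_lt_of_le hax₁ hy.1) ⟨hx₁.le, hx₂.le⟩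
  have hax : a < x := lt_of_lt_of_le hax₁ hx.1
  exact ⟨x, ⟨hax, hfx⟩, fun y hy => hm.injOn hy.1 hax (hy.2.trans hfx.symm)⟩

/-- The retention function `R_ρ` of the paper; at `ρ = ρ_D` it is the optimal retention `R_D`. -/
noncomputable def retention (θ η ρ y : ℝ) : ℝ := min ((θ + η * y) / (ρ + η)) y

section Retention

variable {θ η ρ y : ℝ}

theorem continuous_retention : Continuous fun y => retention θ η ρ y := by
  unfold retention
  fun_prop

theorem continuousOn_retention_rho (hη : 0 ≤ η) :
    ContinuousOn (fun ρ => retention θ η ρ y) (Ioi 0) := by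
  unfold retention
  fun_prop (disch := intro ρ (hρ : 0 < ρ); positivity)

theorem retention_nonneg (hθ : 0 ≤ θ) (hη : 0 ≤ η) (hρ : 0 < ρ) (hy : 0 ≤ y) :
    0 ≤ retention θ η ρ y :=
  le_min (by positivity) hy

theorem norm_retention_mul_le (hθ : 0 ≤ θ) (hη : 0 ≤ η) (hρ : 0 < ρ) (hy : 0 ≤ y) {s : ℝ}
    (hs : 0 ≤ s) : ‖retention θ η ρ y * s‖ ≤ y * s := by
  rw [Real.norm_of_nonneg (mul_nonneg (retention_nonneg hθ hη hρ hy) hs)]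
  exact mul_le_mul_of_nonneg_right (min_le_right _ _) hs

theorem norm_mul_retention_mul_le (hθ : 0 ≤ θ) (hη : 0 ≤ η) (hρ : 0 < ρ) (hy : 0 ≤ y) {s : ℝ}
    (hs : 0 ≤ s) : ‖ρ * (retention θ η ρ y * s)‖ ≤ (θ + η * y) * s := by
  rw [Real.norm_of_nonneg (by positivity [retention_nonneg hθ hη hρ hy]), ← mul_assoc]
  refine mul_le_mul_of_nonneg_right ?_ hs
  calc ρ * retention θ η ρ y ≤ ρ * ((θ + η * y) / (ρ + η)) :=
        mul_le_mul_of_nonneg_left (min_le_left _ _) hρ.le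
    _ = (θ + η * y) * (ρ / (ρ + η)) := mul_div_left_comm _ _ _
    _ ≤ θ + η * y := mul_le_of_le_one_right (by positivity)
        (div_le_one_of_le₀ (by linarith) (by positivity))

theorem strictMonoOn_mul_retention (hθ : 0 ≤ θ) (hη : 0 < η) (hy : 0 < y) :
    StrictMonoOn (fun ρ => ρ * retention θ η ρ y) (Ioi 0) := by
  intro ρ₁ (h₁ : 0 < ρ₁) ρ₂ (h₂ : 0 < ρ₂) h₁₂
  simp only [retention, mul_min_of_nonneg _ _ h₁.le, mul_min_of_nonneg _ _ h₂.le,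
    mul_div_left_comm _ (θ + η * y)]
  refine min_lt_min (mul_lt_mul_of_pos_left ?_ (by positivity)) (by gcongr)
  rw [div_lt_div_iff₀ (by positivity) (by positivity)]
  nlinarith

theorem tendsto_mul_retention_atTop (hη : 0 < η) (hy : 0 < y) :
    Tendsto (fun ρ => ρ * retention θ η ρ y) atTop (𝓝 (θ + η * y)) := by
  have h_eq : ∀ᶠ ρ in atTop, (θ + η * y) * (1 - η / (ρ + η)) = ρ * retention θ η ρ y := by
    filter_upwards [eventually_ge_atTop (θ / y), eventually_gt_atTop 0] with ρ hρθ hρ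
    have hθρ : θ ≤ ρ * y := (div_le_iff₀ hy).1 hρθ
    rw [retention, min_eq_left ((div_le_iff₀ (by positivity)).2 (by nlinarith))]
    field_simp
    ring
  refine Tendsto.congr' h_eq ?_
  have h_frac : Tendsto (fun ρ => η / (ρ + η)) atTop (𝓝 0) :=
    tendsto_const_nhds.div_atTop (tendsto_atTop_add_const_right atTop η tendsto_id)
  simpa using (tendsto_const_nhds (x := (1 : ℝ)).sub h_frac).const_mul (θ + η * y)

end Retention

noncomputable def lundbergFunction (θ η : ℝ) (S : ℝ → ℝ) (ρ : ℝ) : ℝ :=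
  ρ * ∫ y in Ioi 0, retention θ η ρ y * S y

section LundbergFunction

variable {θ η : ℝ} {S : ℝ → ℝ}

theorem lundbergFunction_eq_integral (θ η : ℝ) (S : ℝ → ℝ) (ρ : ℝ) :
    lundbergFunction θ η S ρ = ∫ y in Ioi 0, ρ * (retention θ η ρ y * S y) :=
  (integral_const_mul ρ _).symm

theorem aestronglyMeasurable_retention_mul (hS : IntegrableOn S (Ioi 0)) (ρ : ℝ) :
    AEStronglyMeasurable (fun y => retention θ η ρ y * S y) (volume.restrict (Ioi 0)) :=
  continuous_retention.aestronglyMeasurable.mul hS.aestronglyMeasurable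

theorem integrableOn_retention_mul (hθ : 0 ≤ θ) (hη : 0 ≤ η) (hS0 : ∀ y, 0 ≤ S y)
    (hS : IntegrableOn S (Ioi 0)) (hyS : IntegrableOn (fun y => y * S y) (Ioi 0))
    {ρ : ℝ} (hρ : 0 < ρ) : IntegrableOn (fun y => retention θ η ρ y * S y) (Ioi 0) :=
  hyS.mono' (aestronglyMeasurable_retention_mul hS ρ) <|
    ae_restrict_of_forall_mem measurableSet_Ioi fun y hy =>
      norm_retention_mul_le hθ hη hρ (le_of_lt hy) (hS0 y)

theorem continuousOn_lundbergFunction (hθ : 0 ≤ θ) (hη : 0 ≤ η) (hS0 : ∀ y, 0 ≤ S y)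
    (hS : IntegrableOn S (Ioi 0)) (hyS : IntegrableOn (fun y => y * S y) (Ioi 0)) :
    ContinuousOn (lundbergFunction θ η S) (Ioi 0) := by
  refine continuousOn_id.mul (continuousOn_of_dominated
    (fun ρ _ => aestronglyMeasurable_retention_mul hS ρ)
    (fun ρ hρ => ae_restrict_of_forall_mem measurableSet_Ioi fun y hy =>
      norm_retention_mul_le hθ hη hρ (le_of_lt hy) (hS0 y)) hyS
    (Eventually.of_forall fun y => ?_))
  exact (continuousOn_retention_rho hη).mul continuousOn_const

theorem strictMonoOn_lundbergFunction (hθ : 0 ≤ θ) (hη : 0 < η) (hS0 : ∀ y, 0 ≤ S y)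
    (hS : IntegrableOn S (Ioi 0)) (hyS : IntegrableOn (fun y => y * S y) (Ioi 0))
    (hS_pos : 0 < ∫ y in Ioi 0, S y) : StrictMonoOn (lundbergFunction θ η S) (Ioi 0) := by
  intro ρ₁ (h₁ : 0 < ρ₁) ρ₂ (h₂ : 0 < ρ₂) h₁₂
  set d : ℝ → ℝ := fun y =>
    (ρ₂ * retention θ η ρ₂ y - ρ₁ * retention θ η ρ₁ y) * S y
  have h_int : ∀ {ρ}, 0 < ρ → IntegrableOn (fun y => ρ * (retention θ η ρ y * S y)) (Ioi 0) :=
    fun hρ => (integrableOn_retention_mul hθ hη.le hS0 hS hyS hρ).const_mul _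
  have hd_int : IntegrableOn d (Ioi 0) := by
    refine ((h_int h₂).sub (h_int h₁)).congr_fun (fun y _ => ?_) measurableSet_Ioi
    simp only [d, Pi.sub_apply]
    ring
  have hd_lt : ∀ y ∈ Ioi (0 : ℝ), ρ₁ * retention θ η ρ₁ y < ρ₂ * retention θ η ρ₂ y :=
    fun y hy => strictMonoOn_mul_retention hθ hη hy h₁ h₂ h₁₂
  have hd_nonneg : 0 ≤ᵐ[volume.restrict (Ioi 0)] d :=
    ae_restrict_of_forall_mem measurableSet_Ioi fun y hy =>
      mul_nonneg (sub_nonneg.2 (hd_lt y hy).le) (hS0 y)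
  have hd_support : Function.support S ∩ Ioi 0 ⊆ Function.support d ∩ Ioi 0 :=
    fun y ⟨hSy, hy⟩ => ⟨mul_ne_zero (sub_pos.2 (hd_lt y hy)).ne' hSy, hy⟩
  have hd_pos : 0 < ∫ y in Ioi 0, d y := by
    rw [setIntegral_pos_iff_support_of_nonneg_ae hd_nonneg hd_int]
    rw [setIntegral_pos_iff_support_of_nonneg_ae
      (ae_restrict_of_forall_mem measurableSet_Ioi fun y _ => hS0 y) hS] at hS_pos
    exact hS_pos.trans_le (measure_mono hd_support)
  rw [lundbergFunction_eq_integral, lundbergFunction_eq_integral, ← sub_pos,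
    ← integral_sub (h_int h₂) (h_int h₁)]
  refine hd_pos.trans_eq (setIntegral_congr_fun measurableSet_Ioi fun y _ => ?_)
  simp only [d]
  ring

theorem tendsto_lundbergFunction_atTop (hθ : 0 ≤ θ) (hη : 0 < η) (hS0 : ∀ y, 0 ≤ S y)
    (hS : IntegrableOn S (Ioi 0)) (hyS : IntegrableOn (fun y => y * S y) (Ioi 0)) :
    Tendsto (lundbergFunction θ η S) atTop
      (𝓝 (θ * (∫ y in Ioi 0, S y) + η * ∫ y in Ioi 0, y * S y)) := by
  have h_bound_eq : (fun y => (θ + η * y) * S y) = fun y => θ * S y + η * (y * S y) := by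
    ext y
    ring
  have h_bound_int : IntegrableOn (fun y => (θ + η * y) * S y) (Ioi 0) :=
    h_bound_eq ▸ (hS.const_mul θ).add (hyS.const_mul η)
  have h_limit : ∫ y in Ioi 0, (θ + η * y) * S y =
      θ * (∫ y in Ioi 0, S y) + η * ∫ y in Ioi 0, y * S y := by
    rw [h_bound_eq, integral_add (hS.const_mul θ) (hyS.const_mul η), integral_const_mul,
      integral_const_mul]
  rw [funext (lundbergFunction_eq_integral θ η S), ← h_limit]
  refine tendsto_integral_filter_of_dominated_convergence _
    (Eventually.of_forall fun ρ => (aestronglyMeasurable_retention_mul hS ρ).const_mul ρ)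
    ?_ h_bound_int
    (ae_restrict_of_forall_mem measurableSet_Ioi fun y (hy : 0 < y) =>
      (tendsto_mul_retention_atTop hη hy).mul_const (S y) |>.congr fun ρ => mul_assoc _ _ _)
  filter_upwards [eventually_gt_atTop 0] with ρ hρ
  exact ae_restrict_of_forall_mem measurableSet_Ioi fun y hy =>
    norm_mul_retention_mul_le hθ hη.le hρ (le_of_lt hy) (hS0 y)

theorem tendsto_lundbergFunction_nhdsGT_zero (hθ : 0 ≤ θ) (hη : 0 ≤ η) (hS0 : ∀ y, 0 ≤ S y)
    (hS : IntegrableOn S (Ioi 0)) (hyS : IntegrableOn (fun y => y * S y) (Ioi 0)) :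
    Tendsto (lundbergFunction θ η S) (𝓝[>] 0) (𝓝 0) := by
  have h_upper : Tendsto (fun ρ => ρ * ∫ y in Ioi 0, y * S y) (𝓝[>] 0) (𝓝 0) := by
    refine tendsto_nhdsWithin_of_tendsto_nhds ?_
    simpa using (tendsto_id (x := 𝓝 (0 : ℝ))).mul_const (∫ y in Ioi 0, y * S y)
  refine tendsto_of_tendsto_of_tendsto_of_le_of_le' tendsto_const_nhds h_upper ?_ ?_ <;>
    filter_upwards [self_mem_nhdsWithin] with ρ (hρ : 0 < ρ)
  · exact mul_nonneg hρ.le (setIntegral_nonneg measurableSet_Ioi fun y hy =>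
      mul_nonneg (retention_nonneg hθ hη hρ (le_of_lt hy)) (hS0 y))
  · refine mul_le_mul_of_nonneg_left (setIntegral_mono_on
      (integrableOn_retention_mul hθ hη hS0 hS hyS hρ) hyS measurableSet_Ioi fun y _ =>
        mul_le_mul_of_nonneg_right (min_le_right _ _) (hS0 y)) hρ.le

end LundbergFunction

/-- Proposition 3.2 (existence/uniqueness part): the maximum adjustment coefficient of the
diffusion approximation, namely the unique `ρ > 0` solving
`c − λE[Y] = λρ ∫₀^∞ min((θ + ηy)/(ρ + η), y) S_Y(y) dy`. -/
theorem diffusion_adjustment_coefficient_exists_unique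
    {Ω : Type*} [MeasurableSpace Ω] (μ : Measure Ω) [IsProbabilityMeasure μ]
    (Y : Ω → ℝ) (hYmeas : Measurable Y) (hYnonneg : ∀ ω, 0 ≤ Y ω)
    (hEY : 0 < ∫ ω, Y ω ∂μ) (hY2 : Integrable (fun ω => (Y ω) ^ 2) μ)
    (lam θ η c : ℝ) (hlam : 0 < lam) (hθ : 0 ≤ θ) (hη : 0 < η)
    (hc1 : lam * ∫ ω, Y ω ∂μ < c)
    (hc2 : c < (1 + θ) * lam * (∫ ω, Y ω ∂μ) + (η / 2) * lam * ∫ ω, (Y ω) ^ 2 ∂μ) :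
    ∃! ρ : ℝ, 0 < ρ ∧
      c - lam * ∫ ω, Y ω ∂μ
        = lam * ρ * ∫ y in Set.Ioi (0 : ℝ),
            min ((θ + η * y) / (ρ + η)) y * (μ {ω | y < Y ω}).toReal := by
  set S : ℝ → ℝ := fun y => μ.real {ω | y < Y ω}
  have hY_nn : 0 ≤ᵐ[μ] Y := Eventually.of_forall hYnonneg
  have hY_int : Integrable Y μ :=
    ((memLp_two_iff_integrable_sq hYmeas.aestronglyMeasurable).2 hY2).integrable one_le_two
  have hS0 : ∀ y, 0 ≤ S y := fun y => measureReal_nonneg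
  have hS : IntegrableOn S (Ioi 0) := hY_int.integrableOn_meas_lt hY_nn
  have hS_eq : ∫ y in Ioi 0, S y = ∫ ω, Y ω ∂μ :=
    (hY_int.integral_eq_integral_meas_lt hY_nn).symm
  obtain ⟨hyS, hyS_eq⟩ :=
    integrableOn_mul_meas_lt_and_integral_eq hY_nn hYmeas.aemeasurable hY2
  have h_equation : ∀ ρ, c - lam * ∫ ω, Y ω ∂μ = lam * ρ * ∫ y in Ioi 0,
      min ((θ + η * y) / (ρ + η)) y * (μ {ω | y < Y ω}).toReal ↔
      lundbergFunction θ η S ρ = (c - lam * ∫ ω, Y ω ∂μ) / lam := by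
    intro ρ
    rw [eq_div_iff hlam.ne', lundbergFunction, eq_comm, mul_assoc, mul_comm lam (ρ * _)]
    rfl
  simp_rw [h_equation]
  refine existsUnique_eq_of_strictMonoOn_Ioi
    (continuousOn_lundbergFunction hθ hη.le hS0 hS hyS)
    (strictMonoOn_lundbergFunction hθ hη hS0 hS hyS (hS_eq ▸ hEY))
    (tendsto_lundbergFunction_nhdsGT_zero hθ hη.le hS0 hS hyS)
    (tendsto_lundbergFunction_atTop hθ hη hS0 hS hyS) ⟨div_pos (by linarith) hlam, ?_⟩
  rw [hS_eq, hyS_eq, div_lt_iff₀ hlam]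
  linarith
end

section
/- Let Y be a nonnegative random variable with E[Y] > 0 and E[Y²] < ∞, with survival function S_Y(y) = P(Y > y), and let λ > 0, θ ≥ 0, η > 0. Define Φ(ρ) = λρ ∫₀^∞ min((θ + ηy)/(ρ + η), y) S_Y(y) dy for ρ > 0. Then Φ is strictly increasing on (0, ∞), lim_{ρ→0⁺} Φ(ρ) = 0, and lim_{ρ→∞} Φ(ρ) = λ(θE[Y] + (η/2)E[Y²]). -/
open MeasureTheory Real Filter Set Topology

/-!
With the kernel `k(ρ, y) = ρ · min((θ + ηy)/(ρ + η), y)` (`phiKernel`),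
`Φ(ρ) = λ ∫₀^∞ k(ρ, y) S_Y(y) dy`. For each `y > 0` the kernel `k(·, y)` is strictly
increasing, is at most `ρy` and at most `θ + ηy`, and tends to `θ + ηy` as `ρ → ∞`.
Since `∫₀^∞ S_Y = E[Y] > 0`, strict monotonicity survives integration; the bound `ρy` gives
`Φ(ρ) ≤ λρ E[Y²]/2 → 0`; and dominated convergence with the bound `θ + ηy` gives the limit
at infinity, evaluated by the layer-cake formulas `∫₀^∞ S_Y = E[Y]` and
`∫₀^∞ y S_Y(y) dy = E[Y²]/2`.
-/

section LintegralOfReal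

variable {α β : Type*} [MeasurableSpace α] [MeasurableSpace β] {μ : Measure α} {ν : Measure β}
  {f : α → ℝ} {g : β → ℝ}

lemma integrable_of_lintegral_ofReal_eq (hf0 : 0 ≤ᵐ[μ] f) (hf : AEStronglyMeasurable f μ)
    (hg : Integrable g ν) (h : ∫⁻ a, ENNReal.ofReal (f a) ∂μ = ∫⁻ b, ENNReal.ofReal (g b) ∂ν) :
    Integrable f μ :=
  ⟨hf, (hasFiniteIntegral_iff_ofReal hf0).2 (h ▸ hg.lintegral_lt_top)⟩

lemma integral_eq_of_lintegral_ofReal_eq (hf0 : 0 ≤ᵐ[μ] f) (hf : AEStronglyMeasurable f μ)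
    (hg0 : 0 ≤ᵐ[ν] g) (hg : AEStronglyMeasurable g ν)
    (h : ∫⁻ a, ENNReal.ofReal (f a) ∂μ = ∫⁻ b, ENNReal.ofReal (g b) ∂ν) :
    ∫ a, f a ∂μ = ∫ b, g b ∂ν := by
  rw [integral_eq_lintegral_of_nonneg_ae hf0 hf, integral_eq_lintegral_of_nonneg_ae hg0 hg, h]

end LintegralOfReal

section LayerCake

variable {Ω : Type*} [MeasurableSpace Ω] (μ : Measure Ω)

lemma measurable_measureReal_lt (Y : Ω → ℝ) : Measurable fun t : ℝ => μ.real {ω | t < Y ω} :=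
  Measurable.ennreal_toReal <|
    Antitone.measurable fun _ _ hst => measure_mono fun _ h => hst.trans_lt h

variable [IsFiniteMeasure μ] {Y : Ω → ℝ}

lemma lintegral_ofReal_measureReal_lt (hY0 : 0 ≤ᵐ[μ] Y) (hY : AEMeasurable Y μ) :
    ∫⁻ t in Ioi 0, ENNReal.ofReal (μ.real {ω | t < Y ω}) = ∫⁻ ω, ENNReal.ofReal (Y ω) ∂μ := by
  simp only [ofReal_measureReal (measure_ne_top μ _)]
  exact (lintegral_eq_lintegral_meas_lt μ hY0 hY).symm

lemma lintegral_ofReal_mul_measureReal_lt (hY0 : 0 ≤ᵐ[μ] Y) (hY : AEMeasurable Y μ) :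
    ∫⁻ t in Ioi 0, ENNReal.ofReal (t * μ.real {ω | t < Y ω}) =
      ∫⁻ ω, ENNReal.ofReal (Y ω ^ 2 / 2) ∂μ := by
  have layer := lintegral_comp_eq_lintegral_meas_lt_mul μ hY0 hY (g := fun t => t)
    (fun t _ => continuous_id.intervalIntegrable 0 t)
    (ae_restrict_of_forall_mem measurableSet_Ioi fun t ht => ht.le)
  simp only [integral_id, zero_pow two_ne_zero, sub_zero] at layer
  rw [layer]
  refine setLIntegral_congr_fun measurableSet_Ioi fun t ht => ?_
  rw [ENNReal.ofReal_mul ht.le, ofReal_measureReal (measure_ne_top μ _), mul_comm]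

lemma integrableOn_measureReal_lt (hY0 : 0 ≤ᵐ[μ] Y) (hY : Integrable Y μ) :
    IntegrableOn (fun t => μ.real {ω | t < Y ω}) (Ioi 0) :=
  integrable_of_lintegral_ofReal_eq (ae_of_all _ fun _ => measureReal_nonneg)
    (measurable_measureReal_lt μ Y).aestronglyMeasurable hY
    (lintegral_ofReal_measureReal_lt μ hY0 hY.aemeasurable)

lemma integrableOn_mul_measureReal_lt (hY0 : 0 ≤ᵐ[μ] Y) (hY : AEMeasurable Y μ)
    (hY2 : Integrable (fun ω => Y ω ^ 2) μ) :
    IntegrableOn (fun t => t * μ.real {ω | t < Y ω}) (Ioi 0) :=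
  integrable_of_lintegral_ofReal_eq
    (ae_restrict_of_forall_mem measurableSet_Ioi fun _ ht =>
      mul_nonneg ht.le measureReal_nonneg)
    (measurable_id.mul (measurable_measureReal_lt μ Y)).aestronglyMeasurable (hY2.div_const 2)
    (lintegral_ofReal_mul_measureReal_lt μ hY0 hY)

lemma integral_mul_measureReal_lt (hY0 : 0 ≤ᵐ[μ] Y) (hY : AEMeasurable Y μ) :
    ∫ t in Ioi 0, t * μ.real {ω | t < Y ω} = (∫ ω, Y ω ^ 2 ∂μ) / 2 := by
  rw [← integral_div]
  exact integral_eq_of_lintegral_ofReal_eq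
    (ae_restrict_of_forall_mem measurableSet_Ioi fun _ ht =>
      mul_nonneg ht.le measureReal_nonneg)
    (measurable_id.mul (measurable_measureReal_lt μ Y)).aestronglyMeasurable
    (hY0.mono fun _ _ => by positivity) ((hY.pow_const 2).div_const 2).aestronglyMeasurable
    (lintegral_ofReal_mul_measureReal_lt μ hY0 hY)

end LayerCake

lemma strictMonoOn_setIntegral_mul {X ι : Type*} [MeasurableSpace X] [Preorder ι]
    {μ : Measure X} {s : Set X} {I : Set ι} {k : ι → X → ℝ} {S : X → ℝ} (hs : MeasurableSet s)
    (hk : ∀ x ∈ s, StrictMonoOn (k · x) I) (hS0 : ∀ x ∈ s, 0 ≤ S x)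
    (hS : 0 < ∫ x in s, S x ∂μ) (hkS : ∀ ρ ∈ I, IntegrableOn (fun x => k ρ x * S x) s μ) :
    StrictMonoOn (fun ρ => ∫ x in s, k ρ x * S x ∂μ) I := by
  intro a ha b hb hab
  have hsupp : 0 < μ (Function.support S ∩ s) :=
    (setIntegral_pos_iff_support_of_nonneg_ae (ae_restrict_of_forall_mem hs hS0)
      (Integrable.of_integral_ne_zero hS.ne')).1 hS
  rw [← sub_pos, ← integral_sub (hkS b hb) (hkS a ha)]
  refine (setIntegral_pos_iff_support_of_nonneg_ae ?_ ((hkS b hb).sub (hkS a ha))).2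
    (hsupp.trans_le (measure_mono ?_))
  · refine ae_restrict_of_forall_mem hs fun x hx => ?_
    simpa only [Pi.sub_apply, Pi.zero_apply, ← sub_mul] using
      mul_nonneg (sub_nonneg.2 (hk x hx ha hb hab).le) (hS0 x hx)
  · rintro x ⟨hSx, hx⟩
    refine ⟨?_, hx⟩
    simpa only [Function.mem_support, Pi.sub_apply, ← sub_mul] using
      mul_ne_zero (sub_ne_zero.2 (hk x hx ha hb hab).ne') hSx

noncomputable def phiKernel (θ η ρ y : ℝ) : ℝ := ρ * min ((θ + η * y) / (ρ + η)) y

section PhiKernel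

variable {θ η ρ y : ℝ}

lemma phiKernel_nonneg (hθ : 0 ≤ θ) (hη : 0 ≤ η) (hρ : 0 ≤ ρ) (hy : 0 ≤ y) :
    0 ≤ phiKernel θ η ρ y :=
  mul_nonneg hρ (le_min (by positivity) hy)

lemma phiKernel_le_mul (hρ : 0 ≤ ρ) : phiKernel θ η ρ y ≤ ρ * y :=
  mul_le_mul_of_nonneg_left (min_le_right _ _) hρ

lemma phiKernel_le (hθ : 0 ≤ θ) (hη : 0 ≤ η) (hρ : 0 ≤ ρ) (hy : 0 ≤ y) :
    phiKernel θ η ρ y ≤ θ + η * y :=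
  calc phiKernel θ η ρ y ≤ ρ * ((θ + η * y) / (ρ + η)) :=
        mul_le_mul_of_nonneg_left (min_le_left _ _) hρ
    _ = (θ + η * y) * (ρ / (ρ + η)) := by ring
    _ ≤ (θ + η * y) * 1 := by
        gcongr
        exact div_le_one_of_le₀ (by linarith) (by linarith)
    _ = θ + η * y := mul_one _

lemma phiKernel_strictMonoOn (hη : 0 < η) (hc : 0 < θ + η * y) (hy : 0 < y) :
    StrictMonoOn (phiKernel θ η · y) (Ici 0) := by
  intro a (ha : 0 ≤ a) b (hb : 0 ≤ b) hab
  simp only [phiKernel, mul_min_of_nonneg _ _ ha, mul_min_of_nonneg _ _ hb]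
  refine min_lt_min ?_ (mul_lt_mul_of_pos_right hab hy)
  rw [mul_div_assoc', mul_div_assoc', div_lt_div_iff₀ (by linarith) (by linarith)]
  nlinarith [mul_pos (mul_pos hη hc) (sub_pos.2 hab)]

lemma tendsto_phiKernel_atTop (hy : 0 < y) :
    Tendsto (phiKernel θ η · y) atTop (𝓝 (θ + η * y)) := by
  set c := θ + η * y
  have hquot : Tendsto (fun ρ => c / (ρ + η)) atTop (𝓝 0) :=
    tendsto_const_nhds.div_atTop (tendsto_atTop_add_const_right _ η tendsto_id)
  have hlim : Tendsto (fun ρ => c - η * (c / (ρ + η))) atTop (𝓝 c) := by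
    simpa using tendsto_const_nhds.sub (hquot.const_mul η)
  refine hlim.congr' ?_
  filter_upwards [hquot.eventually (gt_mem_nhds hy), eventually_gt_atTop (-η)] with ρ hsmall hρ
  rw [phiKernel, min_eq_left hsmall.le]
  field_simp [show ρ + η ≠ 0 by linarith]
  ring

end PhiKernel

section IntegralPhiKernel

variable {θ η : ℝ} {S : ℝ → ℝ}

lemma integrableOn_phiKernel_mul {ρ : ℝ} (hθ : 0 ≤ θ) (hη : 0 ≤ η) (hρ : 0 ≤ ρ)
    (hS0 : ∀ y, 0 ≤ S y) (hS1 : IntegrableOn S (Ioi 0))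
    (hS2 : IntegrableOn (fun y => y * S y) (Ioi 0)) :
    IntegrableOn (fun y => phiKernel θ η ρ y * S y) (Ioi 0) := by
  refine (hS2.const_mul ρ).mono' ?_ (ae_restrict_of_forall_mem measurableSet_Ioi fun y hy => ?_)
  · exact (show Continuous (phiKernel θ η ρ) by unfold phiKernel; fun_prop).aestronglyMeasurable.mul
      hS1.aestronglyMeasurable
  · rw [norm_of_nonneg (mul_nonneg (phiKernel_nonneg hθ hη hρ hy.le) (hS0 y)), ← mul_assoc]
    exact mul_le_mul_of_nonneg_right (phiKernel_le_mul hρ) (hS0 y)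

lemma strictMonoOn_integral_phiKernel_mul (hθ : 0 ≤ θ) (hη : 0 < η) (hS0 : ∀ y, 0 ≤ S y)
    (hS1 : IntegrableOn S (Ioi 0)) (hS2 : IntegrableOn (fun y => y * S y) (Ioi 0))
    (hS : 0 < ∫ y in Ioi 0, S y) :
    StrictMonoOn (fun ρ => ∫ y in Ioi 0, phiKernel θ η ρ y * S y) (Ici 0) :=
  strictMonoOn_setIntegral_mul measurableSet_Ioi
    (fun y (hy : 0 < y) => phiKernel_strictMonoOn hη (by positivity) hy) (fun y _ => hS0 y) hS
    fun _ hρ => integrableOn_phiKernel_mul hθ hη.le hρ hS0 hS1 hS2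

lemma tendsto_integral_phiKernel_mul_nhdsGT_zero (hθ : 0 ≤ θ) (hη : 0 ≤ η)
    (hS0 : ∀ y, 0 ≤ S y) (hS1 : IntegrableOn S (Ioi 0))
    (hS2 : IntegrableOn (fun y => y * S y) (Ioi 0)) :
    Tendsto (fun ρ => ∫ y in Ioi 0, phiKernel θ η ρ y * S y) (𝓝[>] 0) (𝓝 0) := by
  have hbound : ∀ ρ ∈ Ioi (0 : ℝ),
      ∫ y in Ioi 0, phiKernel θ η ρ y * S y ≤ ρ * ∫ y in Ioi 0, y * S y := fun ρ hρ => by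
    rw [← integral_const_mul]
    refine setIntegral_mono_on (integrableOn_phiKernel_mul hθ hη hρ.le hS0 hS1 hS2)
      (hS2.const_mul ρ) measurableSet_Ioi fun y _ => ?_
    rw [← mul_assoc]
    exact mul_le_mul_of_nonneg_right (phiKernel_le_mul hρ.le) (hS0 y)
  refine squeeze_zero' ?_ (eventually_mem_nhdsWithin.mono hbound) ?_
  · filter_upwards [eventually_mem_nhdsWithin] with ρ (hρ : 0 < ρ)
    exact setIntegral_nonneg measurableSet_Ioi fun y (hy : 0 < y) =>
      mul_nonneg (phiKernel_nonneg hθ hη hρ.le hy.le) (hS0 y)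
  · have hlin : Tendsto (fun ρ : ℝ => ρ * ∫ y in Ioi 0, y * S y) (𝓝 0) (𝓝 0) := by
      simpa using (tendsto_id (x := 𝓝 (0 : ℝ))).mul_const (∫ y in Ioi 0, y * S y)
    exact hlin.mono_left nhdsWithin_le_nhds

lemma tendsto_integral_phiKernel_mul_atTop (hθ : 0 ≤ θ) (hη : 0 ≤ η)
    (hS0 : ∀ y, 0 ≤ S y) (hS1 : IntegrableOn S (Ioi 0))
    (hS2 : IntegrableOn (fun y => y * S y) (Ioi 0)) :
    Tendsto (fun ρ => ∫ y in Ioi 0, phiKernel θ η ρ y * S y) atTop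
      (𝓝 (θ * (∫ y in Ioi 0, S y) + η * ∫ y in Ioi 0, y * S y)) := by
  have hbound : IntegrableOn (fun y => θ * S y + η * (y * S y)) (Ioi 0) :=
    (hS1.const_mul θ).add (hS2.const_mul η)
  rw [← integral_const_mul, ← integral_const_mul, ← integral_add (hS1.const_mul θ)
    (hS2.const_mul η)]
  refine tendsto_integral_filter_of_dominated_convergence _ ?_ ?_ hbound
    (ae_restrict_of_forall_mem measurableSet_Ioi fun y (hy : 0 < y) => ?_)
  · filter_upwards [eventually_ge_atTop 0] with ρ hρ
    exact (integrableOn_phiKernel_mul hθ hη hρ hS0 hS1 hS2).aestronglyMeasurable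
  · filter_upwards [eventually_ge_atTop 0] with ρ hρ
    refine ae_restrict_of_forall_mem measurableSet_Ioi fun y (hy : 0 < y) => ?_
    rw [norm_of_nonneg (mul_nonneg (phiKernel_nonneg hθ hη hρ hy.le) (hS0 y))]
    exact (mul_le_mul_of_nonneg_right (phiKernel_le hθ hη hρ hy.le) (hS0 y)).trans_eq (by ring)
  · convert (tendsto_phiKernel_atTop hy).mul_const (S y) using 2
    ring

end IntegralPhiKernel

/-- Monotonicity and limits of
`Φ(ρ) = λρ ∫₀^∞ min((θ + ηy)/(ρ + η), y) S_Y(y) dy`: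
`Φ` is strictly increasing on `(0,∞)`, `Φ(ρ) → 0` as `ρ → 0⁺`, and
`Φ(ρ) → λ(θE[Y] + (η/2)E[Y²])` as `ρ → ∞`. -/
theorem diffusion_adjustment_Phi_monotone_and_limits
    {Ω : Type*} [MeasurableSpace Ω] (μ : Measure Ω) [IsProbabilityMeasure μ]
    (Y : Ω → ℝ) (hYmeas : Measurable Y) (hYnonneg : ∀ ω, 0 ≤ Y ω)
    (hEY : 0 < ∫ ω, Y ω ∂μ) (hY2 : Integrable (fun ω => (Y ω) ^ 2) μ)
    (lam θ η : ℝ) (hlam : 0 < lam) (hθ : 0 ≤ θ) (hη : 0 < η)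
    (Φ : ℝ → ℝ)
    (hΦ : ∀ ρ : ℝ, 0 < ρ → Φ ρ
        = lam * ρ * ∫ y in Set.Ioi (0 : ℝ),
            min ((θ + η * y) / (ρ + η)) y * (μ {ω | y < Y ω}).toReal) :
    StrictMonoOn Φ (Set.Ioi 0) ∧
    Filter.Tendsto Φ (nhdsWithin 0 (Set.Ioi 0)) (nhds 0) ∧
    Filter.Tendsto Φ Filter.atTop
      (nhds (lam * (θ * (∫ ω, Y ω ∂μ) + (η / 2) * ∫ ω, (Y ω) ^ 2 ∂μ))) := by
  set S : ℝ → ℝ := fun y => μ.real {ω | y < Y ω}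
  have hY0 : 0 ≤ᵐ[μ] Y := ae_of_all _ hYnonneg
  have hYint : Integrable Y μ :=
    ((memLp_two_iff_integrable_sq hYmeas.aestronglyMeasurable).2 hY2).integrable one_le_two
  have hS0 : ∀ y, 0 ≤ S y := fun _ => measureReal_nonneg
  have hS1 := integrableOn_measureReal_lt μ hY0 hYint
  have hS2 := integrableOn_mul_measureReal_lt μ hY0 hYmeas.aemeasurable hY2
  have hSY : ∫ y in Ioi 0, S y = ∫ ω, Y ω ∂μ := (hYint.integral_eq_integral_meas_lt hY0).symm
  have hΦk : EqOn Φ (fun ρ => lam * ∫ y in Ioi 0, phiKernel θ η ρ y * S y) (Ioi 0) :=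
    fun ρ hρ => by simp only [hΦ ρ hρ, phiKernel, mul_assoc, integral_const_mul]; rfl
  refine ⟨StrictMonoOn.congr (fun a ha b hb hab => ?_) hΦk.symm, ?_, ?_⟩
  · exact mul_lt_mul_of_pos_left (strictMonoOn_integral_phiKernel_mul hθ hη hS0 hS1 hS2
      (hSY ▸ hEY) (Ioi_subset_Ici_self ha) (Ioi_subset_Ici_self hb) hab) hlam
  · simpa using ((tendsto_integral_phiKernel_mul_nhdsGT_zero hθ hη.le hS0 hS1 hS2).const_mul
      lam).congr' (eventuallyEq_nhdsWithin_of_eqOn hΦk).symm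
  · have hlim := (tendsto_integral_phiKernel_mul_atTop hθ hη.le hS0 hS1 hS2).const_mul lam
    convert hlim.congr' (hΦk.eventuallyEq_of_mem (Ioi_mem_atTop 0)).symm using 3
    rw [hSY, integral_mul_measureReal_lt μ hY0 hYmeas.aemeasurable]
    ring
end

section
/- Let Y be a nonnegative random variable with E[Y²] < ∞, and let θ ≥ 0, η > 0, ρ > 0. Define R_D(y) = min((θ + ηy)/(ρ + η), y). Then for every Borel-measurable function R : [0,∞) → [0,∞) with 0 ≤ R(y) ≤ y for all y ≥ 0, one has θE[R(Y)] + ηE[Y R(Y)] − ((ρ + η)/2)E[R(Y)²] ≤ θE[R_D(Y)] + ηE[Y R_D(Y)] − ((ρ + η)/2)E[R_D(Y)²]. -/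
open MeasureTheory Real

/-!
Pointwise in `y`, the integrand `θ r + η y r − ((ρ + η)/2) r²` is a concave quadratic in `r` with
vertex `(θ + η y)/(ρ + η)`, so over `r ≤ y` it is maximized at `min ((θ + η y)/(ρ + η)) y = R_D(y)`.
Since `0 ≤ R(Y) ≤ Y` and `R_D(Y)` is the minimum of two square-integrable variables, all the
expectations are finite, and integrating the pointwise inequality gives the claim.
-/

lemma mul_sub_half_mul_sq_le_min_vertex {c s r y : ℝ} (hs : 0 < s) (hr : r ≤ y) :
    c * r - s / 2 * r ^ 2 ≤ c * min (c / s) y - s / 2 * min (c / s) y ^ 2 := by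
  have hc : c = s * (c / s) := by field_simp
  rcases le_total (c / s) y with hvy | hyv
  · rw [min_eq_left hvy]
    nlinarith [mul_nonneg hs.le (sq_nonneg (r - c / s))]
  · rw [min_eq_right hyv]
    nlinarith [mul_nonneg hs.le (mul_nonneg (sub_nonneg.2 hr) (sub_nonneg.2 hyv)),
      mul_nonneg hs.le (mul_nonneg (sub_nonneg.2 hr) (sub_nonneg.2 hr))]

section Gain

variable {Ω : Type*} [MeasurableSpace Ω] {μ : Measure Ω} [IsFiniteMeasure μ] {Y X : Ω → ℝ}

lemma integrable_gain (hY : MemLp Y 2 μ) (hX : MemLp X 2 μ) (θ η κ : ℝ) :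
    Integrable (fun ω => θ * X ω + η * (Y ω * X ω) - κ * X ω ^ 2) μ :=
  (((hX.integrable one_le_two).const_mul θ).add ((hY.integrable_mul hX).const_mul η)).sub
    (hX.integrable_sq.const_mul κ)

lemma integral_gain (hY : MemLp Y 2 μ) (hX : MemLp X 2 μ) (θ η κ : ℝ) :
    θ * (∫ ω, X ω ∂μ) + η * (∫ ω, Y ω * X ω ∂μ) - κ * ∫ ω, X ω ^ 2 ∂μ
      = ∫ ω, (θ * X ω + η * (Y ω * X ω) - κ * X ω ^ 2) ∂μ := by
  have hX₁ : Integrable (fun ω => θ * X ω) μ := (hX.integrable one_le_two).const_mul θ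
  have hYX : Integrable (fun ω => η * (Y ω * X ω)) μ := (hY.integrable_mul hX).const_mul η
  have hsum : Integrable (fun ω => θ * X ω + η * (Y ω * X ω)) μ := hX₁.add hYX
  rw [integral_sub hsum (hX.integrable_sq.const_mul κ), integral_add hX₁ hYX,
    integral_const_mul, integral_const_mul, integral_const_mul]

end Gain

theorem retention_RD_maximizes_functional_general
    {Ω : Type*} [MeasurableSpace Ω] (μ : Measure Ω) [IsProbabilityMeasure μ]
    (Y : Ω → ℝ) (hYmeas : Measurable Y) (hYnonneg : ∀ ω, 0 ≤ Y ω)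
    (hY2 : Integrable (fun ω => (Y ω) ^ 2) μ)
    (θ η ρ : ℝ) (hη : 0 < η) (hρ : 0 < ρ)
    (RD : ℝ → ℝ) (hRD : ∀ y : ℝ, RD y = min ((θ + η * y) / (ρ + η)) y)
    (R : ℝ → ℝ) (hRmeas : Measurable R)
    (hR : ∀ y : ℝ, 0 ≤ y → 0 ≤ R y ∧ R y ≤ y) :
    θ * (∫ ω, R (Y ω) ∂μ) + η * (∫ ω, Y ω * R (Y ω) ∂μ)
        - (ρ + η) / 2 * ∫ ω, (R (Y ω)) ^ 2 ∂μ
      ≤ θ * (∫ ω, RD (Y ω) ∂μ) + η * (∫ ω, Y ω * RD (Y ω) ∂μ)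
        - (ρ + η) / 2 * ∫ ω, (RD (Y ω)) ^ 2 ∂μ := by
  have hY : MemLp Y 2 μ := (memLp_two_iff_integrable_sq hYmeas.aestronglyMeasurable).2 hY2
  have hRY : MemLp (fun ω => R (Y ω)) 2 μ :=
    hY.of_le (hRmeas.comp hYmeas).aestronglyMeasurable <| ae_of_all _ fun ω => by
      obtain ⟨h0, hle⟩ := hR _ (hYnonneg ω)
      simpa only [norm_eq_abs, abs_of_nonneg h0, abs_of_nonneg (hYnonneg ω)] using hle
  have hRDY : MemLp (fun ω => RD (Y ω)) 2 μ := by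
    have hmin : (fun ω => RD (Y ω)) = (fun ω => (θ + η * Y ω) * (ρ + η)⁻¹) ⊓ Y :=
      funext fun ω => by simp only [hRD, div_eq_mul_inv, Pi.inf_apply]
    have hvertex : MemLp (fun ω => (θ + η * Y ω) * (ρ + η)⁻¹) 2 μ :=
      ((memLp_const θ).add (hY.const_mul η)).mul_const _
    rw [hmin]
    exact hvertex.inf hY
  rw [integral_gain hY hRY, integral_gain hY hRDY]
  refine integral_mono (integrable_gain hY hRY ..) (integrable_gain hY hRDY ..) fun ω => ?_
  have hmax := mul_sub_half_mul_sq_le_min_vertex (c := θ + η * Y ω) (add_pos hρ hη)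
    (hR _ (hYnonneg ω)).2
  simp only [hRD]
  linear_combination hmax

/-- Functional maximization underlying Proposition 3.2: among all Borel retention functions
`R` with `0 ≤ R(y) ≤ y`, the retention `R_D(y) = min((θ + ηy)/(ρ + η), y)` maximizes
`θE[R(Y)] + ηE[Y R(Y)] − ((ρ + η)/2)E[R(Y)²]`. -/
theorem retention_RD_maximizes_functional
    {Ω : Type*} [MeasurableSpace Ω] (μ : Measure Ω) [IsProbabilityMeasure μ]
    (Y : Ω → ℝ) (hYmeas : Measurable Y) (hYnonneg : ∀ ω, 0 ≤ Y ω)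
    (hY2 : Integrable (fun ω => (Y ω) ^ 2) μ)
    (θ η ρ : ℝ) (hθ : 0 ≤ θ) (hη : 0 < η) (hρ : 0 < ρ)
    (RD : ℝ → ℝ) (hRD : ∀ y : ℝ, RD y = min ((θ + η * y) / (ρ + η)) y)
    (R : ℝ → ℝ) (hRmeas : Measurable R)
    (hR : ∀ y : ℝ, 0 ≤ y → 0 ≤ R y ∧ R y ≤ y) :
    θ * (∫ ω, R (Y ω) ∂μ) + η * (∫ ω, Y ω * R (Y ω) ∂μ)
        - (ρ + η) / 2 * ∫ ω, (R (Y ω)) ^ 2 ∂μ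
      ≤ θ * (∫ ω, RD (Y ω) ∂μ) + η * (∫ ω, Y ω * RD (Y ω) ∂μ)
        - (ρ + η) / 2 * ∫ ω, (RD (Y ω)) ^ 2 ∂μ :=
  retention_RD_maximizes_functional_general μ Y hYmeas hYnonneg hY2 θ η ρ hη hρ RD hRD R hRmeas hR
end

section
/- Let θ > 0, η > 0, and y > 0. For each ρ > ln(1+θ)/y, let r(ρ) denote the unique solution in [0, y) of (1 + θ) + η(y − r) = e^{ρ r}. Then r(ρ) ∈ (0, y), the map ρ ↦ ρ r(ρ) is differentiable with derivative d/dρ (ρ r(ρ)) = η r(ρ) / (η + ρ e^{ρ r(ρ)}) > 0, and hence ρ ↦ ρ r(ρ) is strictly increasing. -/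
/-!
Solving the equation for `ρ` gives `ρ = rhoOf θ η y r := log ((1 + θ) + η (y - r)) / r`, a strictly
decreasing function of `r ∈ (0, y)`; so `r(ρ)` is a local inverse of a strictly monotone function
hence continuous, and the inverse function theorem differentiates it. The product rule then gives
`d/dρ (ρ r(ρ)) = η r / (η + ρ e^{ρ r})`, which is positive because `ρ > 0`, and the mean value
theorem turns this into strict monotonicity.
-/

open Real Set Filter Topology

theorem StrictAntiOn.continuousAt_of_local_left_inverse {α β : Type*} [LinearOrder α]
    [TopologicalSpace α] [OrderTopology α] [DenselyOrdered α] [LinearOrder β]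
    [TopologicalSpace β] [OrderTopology β] {f : α → β} {g : β → α} {s : Set α} {a : β}
    (hf : StrictAntiOn f s) (hs : s ∈ 𝓝 (g a)) (hg : ∀ᶠ x in 𝓝 a, g x ∈ s ∧ f (g x) = x) :
    ContinuousAt g a := by
  obtain ⟨hgs, hga⟩ := hg.self_of_nhds
  refine tendsto_order.2 ⟨fun b hb => ?_, fun b hb => ?_⟩
  · obtain ⟨l, ⟨hbl, hla⟩, hls⟩ := exists_Ioc_subset_of_mem_nhds' hs hb
    obtain ⟨c, hlc, hca⟩ := exists_between hla
    have hcs : c ∈ s := hls ⟨hlc, hca.le⟩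
    have hac : a < f c := hga ▸ hf hcs hgs hca
    filter_upwards [hg, Iio_mem_nhds hac] with x ⟨hxs, hfx⟩ hx
    rw [mem_Iio, ← hfx] at hx
    exact hbl.trans_lt (hlc.trans ((hf.lt_iff_gt hxs hcs).1 hx))
  · obtain ⟨u, ⟨hau, hub⟩, hus⟩ := exists_Ico_subset_of_mem_nhds' hs hb
    obtain ⟨c, hac, hcu⟩ := exists_between hau
    have hcs : c ∈ s := hus ⟨hac.le, hcu⟩
    have hca : f c < a := hga ▸ hf hgs hcs hac
    filter_upwards [hg, Ioi_mem_nhds hca] with x ⟨hxs, hfx⟩ hx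
    rw [mem_Ioi, ← hfx] at hx
    exact ((hf.lt_iff_gt hcs hxs).1 hx).trans (hcu.trans_le hub)

noncomputable def rhoOf (θ η y t : ℝ) : ℝ := log (1 + θ + η * (y - t)) / t

section rhoOf

variable {θ η y t ρ : ℝ}

theorem rhoOf_eq (ht : t ≠ 0) (h : 1 + θ + η * (y - t) = exp (ρ * t)) : rhoOf θ η y t = ρ := by
  rw [rhoOf, h, log_exp, mul_div_cancel_right₀ _ ht]

theorem one_lt_one_add_add_mul_sub (hθ : 0 ≤ θ) (hη : 0 < η) (ht : t < y) :
    1 < 1 + θ + η * (y - t) := by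
  nlinarith

theorem rhoOf_pos (hθ : 0 ≤ θ) (hη : 0 < η) (ht : t ∈ Ioo 0 y) : 0 < rhoOf θ η y t :=
  div_pos (log_pos (one_lt_one_add_add_mul_sub hθ hη ht.2)) ht.1

theorem pos_of_eq_exp_mul (hθ : 0 ≤ θ) (hη : 0 < η) (ht : t ∈ Ioo 0 y)
    (h : 1 + θ + η * (y - t) = exp (ρ * t)) : 0 < ρ :=
  rhoOf_eq ht.1.ne' h ▸ rhoOf_pos hθ hη ht

theorem rhoOf_strictAntiOn (hθ : 0 ≤ θ) (hη : 0 < η) : StrictAntiOn (rhoOf θ η y) (Ioo 0 y) := by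
  intro a ha b hb hab
  have hlog : log (1 + θ + η * (y - b)) < log (1 + θ + η * (y - a)) :=
    log_lt_log (by linarith [one_lt_one_add_add_mul_sub hθ hη hb.2]) (by nlinarith)
  exact div_lt_div₀ hlog hab.le (log_pos (one_lt_one_add_add_mul_sub hθ hη ha.2)).le ha.1

theorem hasDerivAt_rhoOf (ht : t ≠ 0) (h : 1 + θ + η * (y - t) = exp (ρ * t)) :
    HasDerivAt (rhoOf θ η y) (-(η + ρ * exp (ρ * t)) / (exp (ρ * t) * t)) t := by
  have hlin : HasDerivAt (fun s => 1 + θ + η * (y - s)) (-η) t := by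
    simpa using ((hasDerivAt_id t).const_sub y).const_mul η |>.const_add (1 + θ)
  refine ((hlin.log (h ▸ (exp_pos _).ne')).div (hasDerivAt_id' t) ht).congr_deriv ?_
  rw [h, log_exp]
  field_simp
  ring

theorem hasDerivAt_mul_of_eventually_eq_exp (hθ : 0 ≤ θ) (hη : 0 < η) {r : ℝ → ℝ}
    (hsol : ∀ᶠ s in 𝓝 ρ, r s ∈ Ioo 0 y ∧ 1 + θ + η * (y - r s) = exp (s * r s)) :
    HasDerivAt (fun s => s * r s) (η * r ρ / (η + ρ * exp (ρ * r ρ))) ρ := by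
  obtain ⟨hrρ, heq⟩ := hsol.self_of_nhds
  have hρ : 0 < ρ := pos_of_eq_exp_mul hθ hη hrρ heq
  have hleft : ∀ᶠ s in 𝓝 ρ, r s ∈ Ioo 0 y ∧ rhoOf θ η y (r s) = s :=
    hsol.mono fun s hs => ⟨hs.1, rhoOf_eq hs.1.1.ne' hs.2⟩
  have hcont : ContinuousAt r ρ := (rhoOf_strictAntiOn hθ hη).continuousAt_of_local_left_inverse
    (Ioo_mem_nhds hrρ.1 hrρ.2) hleft
  have hden : 0 < η + ρ * exp (ρ * r ρ) := by positivity
  have hderiv_ne : -(η + ρ * exp (ρ * r ρ)) / (exp (ρ * r ρ) * r ρ) ≠ 0 :=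
    div_ne_zero (neg_ne_zero.2 hden.ne') (mul_pos (exp_pos _) hrρ.1).ne'
  have hr := (hasDerivAt_rhoOf hrρ.1.ne' heq).of_local_left_inverse hcont hderiv_ne
    (hleft.mono fun s hs => hs.2)
  refine ((hasDerivAt_id' ρ).mul hr).congr_deriv ?_
  field_simp
  ring

end rhoOf

theorem implicit_retention_rho_r_strict_mono_general
    (θ η y : ℝ) (hθ : 0 < θ) (hη : 0 < η)
    (r : ℝ → ℝ)
    (hr : ∀ ρ : ℝ, Real.log (1 + θ) / y < ρ →
      0 ≤ r ρ ∧ r ρ < y ∧ (1 + θ) + η * (y - r ρ) = Real.exp (ρ * r ρ)) :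
    (∀ ρ : ℝ, Real.log (1 + θ) / y < ρ →
      r ρ ∈ Set.Ioo 0 y ∧
      HasDerivWithinAt (fun s : ℝ => s * r s)
        (η * r ρ / (η + ρ * Real.exp (ρ * r ρ)))
        (Set.Ioi (Real.log (1 + θ) / y)) ρ ∧
      0 < η * r ρ / (η + ρ * Real.exp (ρ * r ρ))) ∧
    StrictMonoOn (fun s : ℝ => s * r s) (Set.Ioi (Real.log (1 + θ) / y)) := by
  set L := Real.log (1 + θ) / y
  have hsol : ∀ ρ ∈ Ioi L, r ρ ∈ Ioo 0 y ∧ 1 + θ + η * (y - r ρ) = exp (ρ * r ρ) := by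
    intro ρ hρ
    obtain ⟨hr0, hry, heq⟩ := hr ρ hρ
    refine ⟨⟨hr0.lt_of_ne fun h => ?_, hry⟩, heq⟩
    rw [← h, mul_zero, exp_zero] at heq
    nlinarith
  have hderiv : ∀ ρ ∈ Ioi L, HasDerivAt (fun s => s * r s)
      (η * r ρ / (η + ρ * exp (ρ * r ρ))) ρ := fun ρ hρ =>
    hasDerivAt_mul_of_eventually_eq_exp hθ.le hη (eventually_of_mem (Ioi_mem_nhds hρ) hsol)
  have hpos : ∀ ρ ∈ Ioi L, 0 < η * r ρ / (η + ρ * exp (ρ * r ρ)) := fun ρ hρ => by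
    obtain ⟨hrρ, heq⟩ := hsol ρ hρ
    have := pos_of_eq_exp_mul hθ.le hη hrρ heq
    exact div_pos (mul_pos hη hrρ.1) (by positivity)
  refine ⟨fun ρ hρ => ⟨(hsol ρ hρ).1, (hderiv ρ hρ).hasDerivWithinAt, hpos ρ hρ⟩, ?_⟩
  exact strictMonoOn_of_hasDerivWithinAt_pos (convex_Ioi L)
    (fun ρ hρ => (hderiv ρ hρ).continuousAt.continuousWithinAt)
    (fun ρ hρ => (hderiv ρ (interior_subset hρ)).hasDerivWithinAt)
    (fun ρ hρ => hpos ρ (interior_subset hρ))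

/-- Implicit-function monotonicity: for `θ, η, y > 0` and `ρ > ln(1+θ)/y`, if `r(ρ)` denotes
the unique solution in `[0, y)` of `(1 + θ) + η(y − r) = e^{ρr}`, then `r(ρ) ∈ (0, y)`,
the map `ρ ↦ ρ r(ρ)` has derivative `η r(ρ)/(η + ρ e^{ρ r(ρ)}) > 0` on `(ln(1+θ)/y, ∞)`,
and hence `ρ ↦ ρ r(ρ)` is strictly increasing there. -/
theorem implicit_retention_rho_r_strict_mono
    (θ η y : ℝ) (hθ : 0 < θ) (hη : 0 < η) (hy : 0 < y)
    (r : ℝ → ℝ)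
    (hr : ∀ ρ : ℝ, Real.log (1 + θ) / y < ρ →
      0 ≤ r ρ ∧ r ρ < y ∧ (1 + θ) + η * (y - r ρ) = Real.exp (ρ * r ρ)) :
    (∀ ρ : ℝ, Real.log (1 + θ) / y < ρ →
      r ρ ∈ Set.Ioo 0 y ∧
      HasDerivWithinAt (fun s : ℝ => s * r s)
        (η * r ρ / (η + ρ * Real.exp (ρ * r ρ)))
        (Set.Ioi (Real.log (1 + θ) / y)) ρ ∧
      0 < η * r ρ / (η + ρ * Real.exp (ρ * r ρ))) ∧
    StrictMonoOn (fun s : ℝ => s * r s) (Set.Ioi (Real.log (1 + θ) / y)) :=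
  implicit_retention_rho_r_strict_mono_general θ η y hθ hη r hr
end

section
/- Let R be a nonnegative random variable with P(R > 0) > 0 and E[e^{tR}] < ∞ for all t ≥ 0, and let n > 0. Define g_n(ρ) = (1/ρ)(E[e^{ρR/√n}] − 1 − (ρ/√n) E[R]) for ρ > 0. Then g_n is strictly increasing on (0, ∞), lim_{ρ→0⁺} g_n(ρ) = 0, and lim_{ρ→∞} g_n(ρ) = ∞; consequently, for every A > 0 and λ > 0 there exists a unique ρ > 0 with n λ g_n(ρ) = A. -/
/-!
With `X = R/√n` and `φ(t) = eᵗ - 1 - t ≥ 0` (`expRemainder`), `g_n(ρ) = E[φ(ρX)]/ρ`. Strict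
convexity of `exp` makes `a ↦ φ(at)/a` strictly increasing for every `t > 0`, and `X > 0` with
positive probability, so `g_n` is strictly increasing. On `X ≥ 0` we have
`t²/4 ≤ φ(t) ≤ t² eᵗ`, which squeezes `ρ E[X²]/4 ≤ g_n(ρ) ≤ ρ E[X² e^X]` for `ρ ≤ 1` and gives
both limits. Continuity of the moment generating function and the intermediate value theorem
then give the root.
-/

open MeasureTheory ProbabilityTheory Real Filter Set Topology

noncomputable def expRemainder (t : ℝ) : ℝ := exp t - 1 - t

lemma expRemainder_nonneg (t : ℝ) : 0 ≤ expRemainder t := by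
  unfold expRemainder
  linarith [add_one_le_exp t]

lemma sq_div_four_le_expRemainder {t : ℝ} (ht : 0 ≤ t) : t ^ 2 / 4 ≤ expRemainder t := by
  have h_half : t / 2 + 1 ≤ exp (t / 2) := add_one_le_exp _
  have h_sq : exp t = exp (t / 2) * exp (t / 2) := by rw [← exp_add, add_halves]
  unfold expRemainder
  nlinarith

lemma expRemainder_le_sq_mul_exp {t : ℝ} (ht : 0 ≤ t) : expRemainder t ≤ t ^ 2 * exp t := by
  have h_inv : exp t * (1 - t) ≤ 1 := by
    have h := add_one_le_exp (-t)
    have h_one : exp t * exp (-t) = 1 := by rw [← exp_add, add_neg_cancel, exp_zero]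
    nlinarith [exp_pos t]
  unfold expRemainder
  nlinarith

lemma expRemainder_mul_div_lt {a b t : ℝ} (ha : 0 < a) (hab : a < b) (ht : 0 < t) :
    expRemainder (a * t) / a < expRemainder (b * t) / b := by
  have hb : 0 < b := ha.trans hab
  -- the slope of `exp` between `0` and `s` is strictly increasing in `s`
  have h_slope : (exp (a * t) - 1) / (a * t) < (exp (b * t) - 1) / (b * t) := by
    simpa [exp_zero] using strictConvexOn_exp.secant_strict_mono (mem_univ 0)
      (mem_univ (a * t)) (mem_univ (b * t)) (mul_pos ha ht).ne' (mul_pos hb ht).ne'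
      (mul_lt_mul_of_pos_right hab ht)
  rw [div_lt_div_iff₀ (mul_pos ha ht) (mul_pos hb ht)] at h_slope
  rw [div_lt_div_iff₀ ha hb]
  unfold expRemainder
  nlinarith [mul_pos ha hb]

lemma existsUnique_eq_of_strictMonoOn_Ioi_s10 {f : ℝ → ℝ} {a L A : ℝ}
    (hmono : StrictMonoOn f (Ioi a)) (hcont : ContinuousOn f (Ioi a))
    (hlim : Tendsto f (𝓝[>] a) (𝓝 L)) (htop : Tendsto f atTop atTop) (hA : L < A) :
    ∃! x, a < x ∧ f x = A := by
  obtain ⟨x₁, hx₁A, hx₁⟩ := ((hlim.eventually_lt_const hA).and self_mem_nhdsWithin).exists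
  obtain ⟨x₂, hAx₂, hx₁₂⟩ := ((htop.eventually_gt_atTop A).and (eventually_ge_atTop x₁)).exists
  obtain ⟨x, hx, hfx⟩ := intermediate_value_Icc hx₁₂
    (hcont.mono fun y hy => lt_of_lt_of_le hx₁ hy.1) ⟨hx₁A.le, hAx₂.le⟩
  have hax : a < x := lt_of_lt_of_le hx₁ hx.1
  exact ⟨x, ⟨hax, hfx⟩, fun y ⟨hay, hfy⟩ => hmono.injOn hay hax (hfy.trans hfx.symm)⟩

lemma integrable_exp_mul_of_nonneg {Ω : Type*} [MeasurableSpace Ω] {μ : Measure Ω}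
    [IsFiniteMeasure μ] {X : Ω → ℝ} (hX : ∀ ω, 0 ≤ X ω)
    (hexp : ∀ t, 0 ≤ t → Integrable (fun ω => exp (t * X ω)) μ) (t : ℝ) :
    Integrable (fun ω => exp (t * X ω)) μ := by
  rcases le_total 0 t with ht | ht
  · exact hexp t ht
  have hXmeas : AEMeasurable X μ :=
    aemeasurable_of_aemeasurable_exp_mul one_ne_zero (hexp 1 zero_le_one).aemeasurable
  refine (integrable_const 1).mono' (by fun_prop) (ae_of_all _ fun ω => ?_)
  rw [norm_of_nonneg (exp_pos _).le, exp_le_one_iff]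
  exact mul_nonpos_of_nonpos_of_nonneg ht (hX ω)

/-- The paper's `g_n`, for `X = R/√n`. -/
noncomputable def mgfRemainderQuot {Ω : Type*} [MeasurableSpace Ω] (X : Ω → ℝ) (μ : Measure Ω)
    (ρ : ℝ) : ℝ :=
  (mgf X μ ρ - 1 - ρ * μ[X]) / ρ

namespace mgfRemainderQuot

variable {Ω : Type*} [MeasurableSpace Ω] {μ : Measure Ω} {X : Ω → ℝ}

lemma continuousOn (hexp : ∀ t, Integrable (fun ω => exp (t * X ω)) μ) :
    ContinuousOn (mgfRemainderQuot X μ) (Ioi 0) := by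
  have h_mgf := continuous_mgf hexp
  unfold mgfRemainderQuot
  exact ((h_mgf.sub continuous_const).sub (continuous_id.mul continuous_const)).continuousOn.div
    continuousOn_id fun ρ hρ => (mem_Ioi.mp hρ).ne'

variable [IsProbabilityMeasure μ]

lemma integrable_expRemainder (hexp : ∀ t, Integrable (fun ω => exp (t * X ω)) μ) (ρ : ℝ) :
    Integrable (fun ω => expRemainder (ρ * X ω)) μ :=
  ((hexp ρ).sub (integrable_const 1)).sub
    ((integrable_pow_of_integrable_exp_mul one_ne_zero (hexp 1) (hexp (-1)) 1).const_mul ρ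
      |>.congr (ae_of_all _ fun ω => by simp))

lemma eq_integral (hexp : ∀ t, Integrable (fun ω => exp (t * X ω)) μ) (ρ : ℝ) :
    mgfRemainderQuot X μ ρ = ∫ ω, expRemainder (ρ * X ω) / ρ ∂μ := by
  have hXint : Integrable X μ := by
    simpa using integrable_pow_of_integrable_exp_mul one_ne_zero (hexp 1) (hexp (-1)) 1
  have h_int : ∫ ω, expRemainder (ρ * X ω) ∂μ = mgf X μ ρ - 1 - ρ * μ[X] := by
    unfold expRemainder mgf
    rw [integral_sub, integral_sub, integral_const_mul]
    · simp
    · exact hexp ρ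
    · exact integrable_const 1
    · exact (hexp ρ).sub (integrable_const 1)
    · exact hXint.const_mul ρ
  rw [integral_div, h_int, mgfRemainderQuot]

lemma strictMonoOn (hX : ∀ ω, 0 ≤ X ω) (hexp : ∀ t, Integrable (fun ω => exp (t * X ω)) μ)
    (hpos : 0 < μ {ω | 0 < X ω}) :
    StrictMonoOn (mgfRemainderQuot X μ) (Ioi 0) := by
  intro a ha b hb hab
  have h_le : ∀ ω, expRemainder (a * X ω) / a ≤ expRemainder (b * X ω) / b := fun ω => by
    rcases (hX ω).eq_or_lt with h | h
    · simp [← h, expRemainder]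
    · exact (expRemainder_mul_div_lt ha hab h).le
  rw [eq_integral hexp, eq_integral hexp, ← sub_pos, ← integral_sub
    ((integrable_expRemainder hexp b).div_const b) ((integrable_expRemainder hexp a).div_const a),
    integral_pos_iff_support_of_nonneg (fun ω => sub_nonneg.mpr (h_le ω))
      (((integrable_expRemainder hexp b).div_const b).sub
        ((integrable_expRemainder hexp a).div_const a))]
  refine hpos.trans_le (measure_mono fun ω hω => ?_)
  exact sub_ne_zero.mpr (expRemainder_mul_div_lt ha hab hω).ne'

lemma nonneg (hexp : ∀ t, Integrable (fun ω => exp (t * X ω)) μ) {ρ : ℝ} (hρ : 0 < ρ) : 0 ≤ mgfRemainderQuot X μ ρ := by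
  rw [eq_integral hexp]
  exact integral_nonneg fun ω => div_nonneg (expRemainder_nonneg _) hρ.le

lemma le_mul_integral (hX : ∀ ω, 0 ≤ X ω)
    (hexp : ∀ t, Integrable (fun ω => exp (t * X ω)) μ) {ρ : ℝ} (hρ : 0 < ρ) (hρ₁ : ρ ≤ 1) :
    mgfRemainderQuot X μ ρ ≤ ρ * ∫ ω, X ω ^ 2 * exp (X ω) ∂μ := by
  have h_bound : ∀ ω, expRemainder (ρ * X ω) / ρ ≤ ρ * (X ω ^ 2 * exp (X ω)) := fun ω => by
    have hρX : 0 ≤ ρ * X ω := mul_nonneg hρ.le (hX ω)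
    have h_exp : exp (ρ * X ω) ≤ exp (X ω) := exp_le_exp.mpr (by nlinarith [hX ω])
    rw [div_le_iff₀ hρ]
    calc expRemainder (ρ * X ω) ≤ (ρ * X ω) ^ 2 * exp (ρ * X ω) :=
          expRemainder_le_sq_mul_exp hρX
      _ ≤ (ρ * X ω) ^ 2 * exp (X ω) := by gcongr
      _ = ρ * (X ω ^ 2 * exp (X ω)) * ρ := by ring
  have h_int : Integrable (fun ω => X ω ^ 2 * exp (X ω)) μ := by
    simpa using integrable_pow_mul_exp_of_integrable_exp_mul (v := 1) one_ne_zero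
      (by simpa [one_add_one_eq_two] using hexp 2) (by simp) 2
  rw [eq_integral hexp, ← integral_const_mul]
  exact integral_mono ((integrable_expRemainder hexp ρ).div_const ρ) (h_int.const_mul ρ) h_bound

lemma mul_integral_le (hX : ∀ ω, 0 ≤ X ω)
    (hexp : ∀ t, Integrable (fun ω => exp (t * X ω)) μ) {ρ : ℝ} (hρ : 0 < ρ) :
    ρ * ((∫ ω, X ω ^ 2 ∂μ) / 4) ≤ mgfRemainderQuot X μ ρ := by
  have h_bound : ∀ ω, ρ * (X ω ^ 2 / 4) ≤ expRemainder (ρ * X ω) / ρ := fun ω => by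
    rw [le_div_iff₀ hρ]
    nlinarith [sq_div_four_le_expRemainder (mul_nonneg hρ.le (hX ω))]
  rw [eq_integral hexp, ← integral_div, ← integral_const_mul]
  exact integral_mono
    ((integrable_pow_of_integrable_exp_mul one_ne_zero (hexp 1) (hexp (-1)) 2).div_const 4
      |>.const_mul ρ)
    ((integrable_expRemainder hexp ρ).div_const ρ) h_bound

lemma tendsto_nhdsGT_zero (hX : ∀ ω, 0 ≤ X ω)
    (hexp : ∀ t, Integrable (fun ω => exp (t * X ω)) μ) : Tendsto (mgfRemainderQuot X μ) (𝓝[>] 0) (𝓝 0) := by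
  have h_lin : Tendsto (fun ρ => ρ * ∫ ω, X ω ^ 2 * exp (X ω) ∂μ) (𝓝[>] 0) (𝓝 0) := by
    simpa using (tendsto_id.mul_const _).mono_left (nhdsWithin_le_nhds (a := (0 : ℝ)))
  refine tendsto_of_tendsto_of_tendsto_of_le_of_le' tendsto_const_nhds h_lin ?_ ?_
  · filter_upwards [self_mem_nhdsWithin] with ρ hρ using nonneg hexp hρ
  · filter_upwards [Ioc_mem_nhdsGT zero_lt_one] with ρ hρ using le_mul_integral hX hexp hρ.1 hρ.2

lemma tendsto_atTop (hX : ∀ ω, 0 ≤ X ω) (hexp : ∀ t, Integrable (fun ω => exp (t * X ω)) μ)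
    (hpos : 0 < μ {ω | 0 < X ω}) :
    Tendsto (mgfRemainderQuot X μ) atTop atTop := by
  have h_sq : 0 < ∫ ω, X ω ^ 2 ∂μ := by
    rw [integral_pos_iff_support_of_nonneg (fun ω => sq_nonneg _)
      (integrable_pow_of_integrable_exp_mul one_ne_zero (hexp 1) (hexp (-1)) 2)]
    exact hpos.trans_le (measure_mono fun ω hω => pow_ne_zero 2 (ne_of_gt hω))
  refine tendsto_atTop_mono' atTop ?_
    (tendsto_id.atTop_mul_const (by positivity : 0 < (∫ ω, X ω ^ 2 ∂μ) / 4))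
  filter_upwards [eventually_gt_atTop 0] with ρ hρ using mul_integral_le hX hexp hρ

end mgfRemainderQuot

theorem gn_monotone_limits_and_unique_root_general
    {Ω : Type*} [MeasurableSpace Ω] (μ : Measure Ω) [IsProbabilityMeasure μ]
    (R : Ω → ℝ) (hRnonneg : ∀ ω, 0 ≤ R ω)
    (hRpos : 0 < μ {ω | 0 < R ω})
    (hInt : ∀ t : ℝ, 0 ≤ t → Integrable (fun ω => Real.exp (t * R ω)) μ)
    (n : ℝ) (hn : 0 < n)
    (g : ℝ → ℝ)
    (hg : ∀ ρ : ℝ, 0 < ρ → g ρ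
        = (1 / ρ) * ((∫ ω, Real.exp (ρ * R ω / Real.sqrt n) ∂μ) - 1
            - (ρ / Real.sqrt n) * ∫ ω, R ω ∂μ)) :
    StrictMonoOn g (Set.Ioi 0) ∧
    Filter.Tendsto g (nhdsWithin 0 (Set.Ioi 0)) (nhds 0) ∧
    Filter.Tendsto g Filter.atTop Filter.atTop ∧
    ∀ A lam : ℝ, 0 < A → 0 < lam → ∃! ρ : ℝ, 0 < ρ ∧ n * lam * g ρ = A := by
  set X : Ω → ℝ := fun ω => R ω / √n
  have hsqrt : 0 < √n := sqrt_pos.mpr hn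
  have hX : ∀ ω, 0 ≤ X ω := fun ω => div_nonneg (hRnonneg ω) hsqrt.le
  have hexp : ∀ t, Integrable (fun ω => exp (t * X ω)) μ :=
    integrable_exp_mul_of_nonneg hX fun t ht => by
      simpa [X, mul_div_assoc', div_mul_eq_mul_div] using hInt (t / √n) (div_nonneg ht hsqrt.le)
  have hpos : 0 < μ {ω | 0 < X ω} := by simpa [X, div_pos_iff_of_pos_right hsqrt] using hRpos
  have hgX : EqOn g (mgfRemainderQuot X μ) (Ioi 0) := fun ρ hρ => by
    rw [hg ρ hρ, mgfRemainderQuot, mgf, integral_div]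
    simp only [X, mul_div_assoc']
    ring
  have hmono := (mgfRemainderQuot.strictMonoOn hX hexp hpos).congr hgX.symm
  have hlim : Tendsto g (𝓝[>] 0) (𝓝 0) := (mgfRemainderQuot.tendsto_nhdsGT_zero hX hexp).congr'
    (eventually_nhdsWithin_of_forall fun ρ hρ => (hgX hρ).symm)
  have htop : Tendsto g atTop atTop := (mgfRemainderQuot.tendsto_atTop hX hexp hpos).congr'
    (eventually_gt_atTop 0 |>.mono fun ρ hρ => (hgX hρ).symm)
  refine ⟨hmono, hlim, htop, fun A lam hA hlam => ?_⟩
  have hnlam : 0 < n * lam := mul_pos hn hlam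
  exact existsUnique_eq_of_strictMonoOn_Ioi_s10
    (fun a ha b hb hab => mul_lt_mul_of_pos_left (hmono ha hb hab) hnlam)
    (((mgfRemainderQuot.continuousOn hexp).congr hgX).const_smul (n * lam))
    (by simpa using hlim.const_mul (n * lam)) (htop.const_mul_atTop hnlam) hA

/-- Properties of `g_n(ρ) = (1/ρ)(E[e^{ρR/√n}] − 1 − (ρ/√n)E[R])` for a nonnegative
random variable `R` with `P(R > 0) > 0` and all exponential moments finite:
`g_n` is strictly increasing on `(0,∞)`, `g_n(ρ) → 0` as `ρ → 0⁺`, `g_n(ρ) → ∞` as `ρ → ∞`;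
consequently `nλ g_n(ρ) = A` has a unique positive root for every `A, λ > 0`. -/
theorem gn_monotone_limits_and_unique_root
    {Ω : Type*} [MeasurableSpace Ω] (μ : Measure Ω) [IsProbabilityMeasure μ]
    (R : Ω → ℝ) (hRmeas : Measurable R) (hRnonneg : ∀ ω, 0 ≤ R ω)
    (hRpos : 0 < μ {ω | 0 < R ω})
    (hInt : ∀ t : ℝ, 0 ≤ t → Integrable (fun ω => Real.exp (t * R ω)) μ)
    (n : ℝ) (hn : 0 < n)
    (g : ℝ → ℝ)
    (hg : ∀ ρ : ℝ, 0 < ρ → g ρ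
        = (1 / ρ) * ((∫ ω, Real.exp (ρ * R ω / Real.sqrt n) ∂μ) - 1
            - (ρ / Real.sqrt n) * ∫ ω, R ω ∂μ)) :
    StrictMonoOn g (Set.Ioi 0) ∧
    Filter.Tendsto g (nhdsWithin 0 (Set.Ioi 0)) (nhds 0) ∧
    Filter.Tendsto g Filter.atTop Filter.atTop ∧
    ∀ A lam : ℝ, 0 < A → 0 < lam → ∃! ρ : ℝ, 0 < ρ ∧ n * lam * g ρ = A :=
  gn_monotone_limits_and_unique_root_general μ R hRnonneg hRpos hInt n hn g hg
end

section
/- Let R be a nonnegative random variable with P(R > 0) > 0, E[R²] < ∞, and E[e^{tR}] < ∞ for all t ≥ 0; let n > 0, λ > 0, and A > 0. Suppose ρ_n > 0 satisfies (nλ/ρ_n)(E[e^{ρ_n R/√n}] − 1 − (ρ_n/√n) E[R]) = A, and define ρ_D = 2A/(λE[R²]). Then ρ_n < ρ_D. -/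
open MeasureTheory Real Set

/-! With `c = ρ_n / √n`, the pointwise bound `e^{cR} ≥ 1 + cR + (cR)²/2`, strict on `{R > 0}`, gives
`E[e^{cR}] − 1 − c E[R] > (c²/2) E[R²]`. Multiplying by `nλ/ρ_n` turns the defining equation of
`ρ_n` into `A > λ ρ_n E[R²] / 2`, which is `ρ_n < ρ_D`. -/

theorem quadratic_lt_exp_of_pos {x : ℝ} (hx : 0 < x) : 1 + x + x ^ 2 / 2 < exp x := by
  have h := sum_le_exp_of_nonneg hx.le 4
  simp only [Finset.sum_range_succ, Finset.sum_range_zero, Nat.factorial] at h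
  norm_num at h
  nlinarith [pow_pos hx 3]

namespace MeasureTheory

variable {α : Type*} [MeasurableSpace α] {μ : Measure α}

theorem integral_lt_integral_of_ae_le_of_measure_setOf_lt_pos {f g : α → ℝ}
    (hf : Integrable f μ) (hg : Integrable g μ) (hle : f ≤ᵐ[μ] g)
    (hlt : 0 < μ {x | f x < g x}) : ∫ x, f x ∂μ < ∫ x, g x ∂μ := by
  rw [← sub_pos, ← integral_sub hg hf,
    integral_pos_iff_support_of_nonneg_ae (hle.mono fun x => sub_nonneg.2) (hg.sub hf)]
  exact hlt.trans_le (measure_mono fun x hx => (sub_pos.2 hx).ne')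

theorem integral_sq_pos_of_measure_support_pos {R : α → ℝ}
    (hR2 : Integrable (fun x => R x ^ 2) μ) (hR : 0 < μ (Function.support R)) :
    0 < ∫ x, R x ^ 2 ∂μ := by
  rw [integral_pos_iff_support_of_nonneg (fun x => sq_nonneg (R x)) hR2]
  simpa only [Function.support, ne_eq, pow_eq_zero_iff two_ne_zero] using hR

theorem one_add_mul_integral_add_sq_lt_integral_exp_mul [IsProbabilityMeasure μ]
    {R : α → ℝ} {c : ℝ} (hc : 0 < c) (hR : ∀ x, 0 ≤ R x) (hRpos : 0 < μ {x | 0 < R x})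
    (hR1 : Integrable R μ) (hR2 : Integrable (fun x => R x ^ 2) μ)
    (hexp : Integrable (fun x => exp (c * R x)) μ) :
    1 + c * ∫ x, R x ∂μ + c ^ 2 / 2 * ∫ x, R x ^ 2 ∂μ < ∫ x, exp (c * R x) ∂μ := by
  have hquad : ∀ x, 1 + c * R x + c ^ 2 / 2 * R x ^ 2 = 1 + c * R x + (c * R x) ^ 2 / 2 :=
    fun x => by ring
  have hlin : Integrable (fun x => 1 + c * R x) μ := (integrable_const 1).add (hR1.const_mul c)
  have hquadInt : Integrable (fun x => 1 + c * R x + c ^ 2 / 2 * R x ^ 2) μ :=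
    hlin.add (hR2.const_mul _)
  calc 1 + c * ∫ x, R x ∂μ + c ^ 2 / 2 * ∫ x, R x ^ 2 ∂μ
      = ∫ x, 1 + c * R x + c ^ 2 / 2 * R x ^ 2 ∂μ := by
        rw [integral_add hlin (hR2.const_mul _),
          integral_add (integrable_const 1) (hR1.const_mul c), integral_const_mul,
          integral_const_mul]
        simp
    _ < ∫ x, exp (c * R x) ∂μ := by
        refine integral_lt_integral_of_ae_le_of_measure_setOf_lt_pos hquadInt hexp
          (ae_of_all _ fun x => ?_) (hRpos.trans_le (measure_mono fun x hx => ?_))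
        · dsimp only
          rw [hquad]
          exact quadratic_le_exp_of_nonneg (mul_nonneg hc.le (hR x))
        · simp only [mem_ofPred_eq, hquad]
          exact quadratic_lt_exp_of_pos (mul_pos hc hx)

end MeasureTheory

theorem scaled_adjustment_lt_diffusion_adjustment_general
    {Ω : Type*} [MeasurableSpace Ω] (μ : Measure Ω) [IsProbabilityMeasure μ]
    (R : Ω → ℝ) (hRmeas : Measurable R) (hRnonneg : ∀ ω, 0 ≤ R ω)
    (hRpos : 0 < μ {ω | 0 < R ω})
    (hR2 : Integrable (fun ω => (R ω) ^ 2) μ)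
    (hInt : ∀ t : ℝ, 0 ≤ t → Integrable (fun ω => Real.exp (t * R ω)) μ)
    (n lam A : ℝ) (hn : 0 < n) (hlam : 0 < lam)
    (ρn : ℝ) (hρn : 0 < ρn)
    (heq : (n * lam / ρn) * ((∫ ω, Real.exp (ρn * R ω / Real.sqrt n) ∂μ) - 1
        - (ρn / Real.sqrt n) * ∫ ω, R ω ∂μ) = A)
    (ρD : ℝ) (hρD : ρD = 2 * A / (lam * ∫ ω, (R ω) ^ 2 ∂μ)) :
    ρn < ρD := by
  have hR1 : Integrable R μ :=
    ((memLp_two_iff_integrable_sq hRmeas.aestronglyMeasurable).2 hR2).integrable one_le_two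
  simp_rw [mul_div_right_comm ρn] at heq
  set c := ρn / √n
  have hc : 0 < c := by positivity
  have hc2 : c ^ 2 = ρn ^ 2 / n := by rw [div_pow, sq_sqrt hn.le]
  have hgap := one_add_mul_integral_add_sq_lt_integral_exp_mul hc hRnonneg hRpos hR1 hR2
    (hInt c hc.le)
  have hm : 0 < ∫ ω, R ω ^ 2 ∂μ :=
    integral_sq_pos_of_measure_support_pos hR2 (hRpos.trans_le (measure_mono fun ω h => h.ne'))
  rw [hρD, lt_div_iff₀ (by positivity), ← heq]
  calc ρn * (lam * ∫ ω, R ω ^ 2 ∂μ) = n * lam / ρn * (c ^ 2 * ∫ ω, R ω ^ 2 ∂μ) := by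
        rw [hc2]; field_simp
    _ < n * lam / ρn * (2 * ((∫ ω, exp (c * R ω) ∂μ) - 1 - c * ∫ ω, R ω ∂μ)) := by
        gcongr ?_ * ?_; linarith
    _ = _ := by ring

/-- Lemma 3.1: for a nonnegative random variable `R` with `P(R > 0) > 0`, finite second
moment, and all exponential moments finite, if `ρ_n > 0` satisfies
`(nλ/ρ_n)(E[e^{ρ_n R/√n}] − 1 − (ρ_n/√n)E[R]) = A` and `ρ_D = 2A/(λE[R²])`, then
`ρ_n < ρ_D`. -/
theorem scaled_adjustment_lt_diffusion_adjustment
    {Ω : Type*} [MeasurableSpace Ω] (μ : Measure Ω) [IsProbabilityMeasure μ]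
    (R : Ω → ℝ) (hRmeas : Measurable R) (hRnonneg : ∀ ω, 0 ≤ R ω)
    (hRpos : 0 < μ {ω | 0 < R ω})
    (hR2 : Integrable (fun ω => (R ω) ^ 2) μ)
    (hInt : ∀ t : ℝ, 0 ≤ t → Integrable (fun ω => Real.exp (t * R ω)) μ)
    (n lam A : ℝ) (hn : 0 < n) (hlam : 0 < lam) (hA : 0 < A)
    (ρn : ℝ) (hρn : 0 < ρn)
    (heq : (n * lam / ρn) * ((∫ ω, Real.exp (ρn * R ω / Real.sqrt n) ∂μ) - 1
        - (ρn / Real.sqrt n) * ∫ ω, R ω ∂μ) = A)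
    (ρD : ℝ) (hρD : ρD = 2 * A / (lam * ∫ ω, (R ω) ^ 2 ∂μ)) :
    ρn < ρD :=
  scaled_adjustment_lt_diffusion_adjustment_general μ R hRmeas hRnonneg hRpos hR2 hInt n lam A hn
    hlam ρn hρn heq ρD hρD
end

section
/- Let Y be a nonnegative random variable with a continuous probability density function f on [0,∞) and survival function S(y) = P(Y > y) satisfying S(y) > 0 for all y ≥ 0. Suppose the hazard rate h(y) = f(y)/S(y) satisfies lim_{y→∞} h(y) = ℓ with ℓ > 0, and let a ∈ (0, ℓ) be such that E[e^{aY}] < ∞. Then lim_{d→∞} ( ∫_d^∞ e^{ay} f(y) dy ) / ( e^{ad} S(d) ) = ℓ/(ℓ − a). -/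
/-!
Write `S(d) = ∫_d^∞ f`. Both `N(d) = ∫_d^∞ e^{ay} f(y) dy` and `D(d) = e^{ad} S(d)` tend to zero,
with `N' = -e^{ad} f` and `D' = e^{ad} (a S - f)`, so by L'Hôpital `N / D` has the limit of
`f / (f - a S) = h / (h - a)`, namely `ℓ / (ℓ - a)`. The vanishing of `N` and `D` comes from the
hazard rate itself: once `h > b` with `a < b < ℓ`, `(e^{bd} S(d))' = e^{bd} (b S - f) ≤ 0`, so `S`,
and with it `f = h S`, is `O(e^{-bd})`.
-/

open MeasureTheory Real Filter Set Asymptotics Topology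

theorem hasDerivAt_integral_Ioi {E : Type*} [NormedAddCommGroup E] [NormedSpace ℝ E]
    [CompleteSpace E] {g : ℝ → E} {c d : ℝ} (hg : IntegrableOn g (Ioi c))
    (hgc : ContinuousOn g (Ioi c)) (hcd : c < d) :
    HasDerivAt (fun u => ∫ y in Ioi u, g y) (-g d) d := by
  have hFTC : HasDerivAt (fun u => ∫ y in c..u, g y) (g d) d :=
    intervalIntegral.integral_hasDerivAt_right
      ((intervalIntegrable_iff_integrableOn_Ioc_of_le hcd.le).2 (hg.mono_set Ioc_subset_Ioi_self))
      (hgc.stronglyMeasurableAtFilter isOpen_Ioi d hcd) (hgc.continuousAt (Ioi_mem_nhds hcd))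
  refine (hFTC.const_sub (∫ y in Ioi c, g y)).congr_of_eventuallyEq ?_
  filter_upwards [Ioi_mem_nhds hcd] with u hu
  rw [← intervalIntegral.integral_Ioi_sub_Ioi hg hu.le, sub_sub_cancel]

theorem eventually_hasDerivAt_integral_Ioi {E : Type*} [NormedAddCommGroup E] [NormedSpace ℝ E]
    [CompleteSpace E] {g : ℝ → E} {c : ℝ} (hgc : ContinuousOn g (Ioi c))
    (hne : ∀ᶠ d in atTop, ∫ y in Ioi d, g y ≠ 0) :
    ∀ᶠ d in atTop, HasDerivAt (fun u => ∫ y in Ioi u, g y) (-g d) d := by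
  -- the Bochner integral of a non-integrable function is `0`
  obtain ⟨d₀, hd₀⟩ := hne.exists
  have hg₀ : IntegrableOn g (Ioi d₀) := Integrable.of_integral_ne_zero hd₀
  have hg : IntegrableOn g (Ioi (max c d₀)) :=
    hg₀.mono_set (Ioi_subset_Ioi (le_max_right c d₀))
  filter_upwards [eventually_gt_atTop (max c d₀)] with d hd
  exact hasDerivAt_integral_Ioi hg (hgc.mono (Ioi_subset_Ioi (le_max_left c d₀))) hd

theorem hasDerivAt_exp_const_mul_mul {g : ℝ → ℝ} {g' k u : ℝ} (hg : HasDerivAt g g' u) :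
    HasDerivAt (fun x => exp (k * x) * g x) (exp (k * u) * (k * g u + g')) u := by
  have hexp : HasDerivAt (fun x => exp (k * x)) (exp (k * u) * k) u := by
    simpa using HasDerivAt.exp ((hasDerivAt_id u).const_mul k)
  exact (HasDerivAt.mul hexp hg).congr_deriv (by ring)

theorem isBigO_exp_neg_of_hasDerivAt_le {g g' : ℝ → ℝ} {b : ℝ}
    (hderiv : ∀ᶠ u in atTop, HasDerivAt g (g' u) u) (hle : ∀ᶠ u in atTop, g' u ≤ -b * g u)
    (hnonneg : ∀ᶠ u in atTop, 0 ≤ g u) : g =O[atTop] fun u => exp (-b * u) := by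
  obtain ⟨c, hc⟩ := eventually_atTop.1 (hderiv.and (hle.and hnonneg))
  have hderiv' : ∀ u ∈ Ici c,
      HasDerivAt (fun u => exp (b * u) * g u) (exp (b * u) * (b * g u + g' u)) u :=
    fun u hu => hasDerivAt_exp_const_mul_mul (hc u hu).1
  have hanti : AntitoneOn (fun u => exp (b * u) * g u) (Ici c) := by
    refine antitoneOn_of_hasDerivWithinAt_nonpos (convex_Ici c)
      (fun u hu => (hderiv' u hu).continuousAt.continuousWithinAt)
      (fun u hu => (hderiv' u (interior_subset hu)).hasDerivWithinAt) fun u hu => ?_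
    have := (hc u (interior_subset hu)).2.1
    exact mul_nonpos_of_nonneg_of_nonpos (exp_pos _).le (by linarith)
  refine IsBigO.of_bound (exp (b * c) * g c) ?_
  filter_upwards [eventually_ge_atTop c] with u hu
  rw [norm_of_nonneg (hc u hu).2.2, norm_of_nonneg (exp_pos _).le]
  calc g u = exp (-b * u) * (exp (b * u) * g u) := by
        rw [← mul_assoc, ← exp_add]; simp
    _ ≤ exp (-b * u) * (exp (b * c) * g c) :=
        mul_le_mul_of_nonneg_left (hanti self_mem_Ici hu hu) (exp_pos _).le
    _ = _ := mul_comm _ _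

theorem isBigO_exp_mul_of_isBigO_exp_neg {l : Filter ℝ} {g : ℝ → ℝ} {a b : ℝ}
    (h : g =O[l] fun u => exp (-b * u)) :
    (fun u => exp (a * u) * g u) =O[l] fun u => exp (-(b - a) * u) := by
  refine ((isBigO_refl (fun u => exp (a * u)) l).mul h).congr_right fun u => ?_
  rw [← exp_add]; ring_nf

theorem eventually_mul_lt_of_tendsto_div {α : Type*} {l : Filter α} {f g : α → ℝ} {ℓ r : ℝ}
    (hg : ∀ᶠ x in l, 0 < g x) (h : Tendsto (fun x => f x / g x) l (𝓝 ℓ)) (hr : r < ℓ) :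
    ∀ᶠ x in l, r * g x < f x := by
  filter_upwards [hg, h.eventually (eventually_gt_nhds hr)] with x hgx hx
  exact (lt_div_iff₀ hgx).1 hx

theorem integral_Ioi_isBigO_exp_neg_of_hazard {f : ℝ → ℝ} {c ℓ b : ℝ}
    (hf : ContinuousOn f (Ioi c)) (hpos : ∀ᶠ d in atTop, 0 < ∫ y in Ioi d, f y)
    (hhaz : Tendsto (fun d => f d / ∫ y in Ioi d, f y) atTop (𝓝 ℓ)) (hb : b < ℓ) :
    (fun d => ∫ y in Ioi d, f y) =O[atTop] fun d => exp (-b * d) := by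
  refine isBigO_exp_neg_of_hasDerivAt_le
    (eventually_hasDerivAt_integral_Ioi hf (hpos.mono fun _ h => h.ne')) ?_
    (hpos.mono fun _ h => h.le)
  filter_upwards [eventually_mul_lt_of_tendsto_div hpos hhaz hb] with d hd
  linarith

theorem tendsto_integral_exp_mul_div_of_hazard {f : ℝ → ℝ} {c ℓ a : ℝ}
    (hf : ContinuousOn f (Ici c)) (hpos : ∀ᶠ d in atTop, 0 < ∫ y in Ioi d, f y)
    (hhaz : Tendsto (fun d => f d / ∫ y in Ioi d, f y) atTop (𝓝 ℓ)) (haℓ : a < ℓ) :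
    Tendsto (fun d => (∫ y in Ioi d, exp (a * y) * f y) / (exp (a * d) * ∫ y in Ioi d, f y))
      atTop (𝓝 (ℓ / (ℓ - a))) := by
  set S : ℝ → ℝ := fun d => ∫ y in Ioi d, f y
  have hf' : ContinuousOn f (Ioi c) := hf.mono Ioi_subset_Ici_self
  obtain ⟨b, hab, hbℓ⟩ := exists_between haℓ
  have hS_decay := integral_Ioi_isBigO_exp_neg_of_hazard hf' hpos hhaz hbℓ
  have hf_decay : f =O[atTop] fun d => exp (-b * d) :=
    (isBigO_of_div_tendsto_nhds (hpos.mono fun _ h h0 => absurd h0 h.ne') ℓ hhaz).trans hS_decay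
  have hE_int : IntegrableOn (fun y => exp (a * y) * f y) (Ioi c) :=
    integrable_of_isBigO_exp_neg (sub_pos.2 hab) (by fun_prop)
      (isBigO_exp_mul_of_isBigO_exp_neg hf_decay)
  have hfa := eventually_mul_lt_of_tendsto_div hpos hhaz haℓ
  refine HasDerivAt.lhopital_zero_atTop (f' := fun d => -(exp (a * d) * f d))
    (g' := fun d => exp (a * d) * (a * S d - f d)) ?_ ?_ ?_
    (tendsto_integral_Ioi_zero tendsto_id) ?_ ?_
  · filter_upwards [eventually_gt_atTop c] with d hd
    exact hasDerivAt_integral_Ioi hE_int (by fun_prop) hd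
  · filter_upwards [eventually_hasDerivAt_integral_Ioi hf' (hpos.mono fun _ h => h.ne')] with d hd
    exact (hasDerivAt_exp_const_mul_mul hd).congr_deriv (by ring)
  · filter_upwards [hfa] with d hd
    exact mul_ne_zero (exp_pos _).ne' (by linarith)
  · refine (isBigO_exp_mul_of_isBigO_exp_neg hS_decay).trans_tendsto ?_
    exact tendsto_exp_comp_nhds_zero.2 (tendsto_id.const_mul_atTop_of_neg (by linarith))
  · have hlim : Tendsto (fun d => f d / S d / (f d / S d - a)) atTop (𝓝 (ℓ / (ℓ - a))) :=
      hhaz.div (hhaz.sub_const a) (sub_ne_zero.2 haℓ.ne')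
    refine hlim.congr' ?_
    filter_upwards [hpos, hfa] with d hSd hd
    have hS0 : S d ≠ 0 := hSd.ne'
    have hfS : f d - a * S d ≠ 0 := by linarith
    rw [show a * S d - f d = -(f d - a * S d) by ring, mul_neg, div_neg, neg_div, neg_neg]
    field_simp

theorem hazard_rate_limit_conditional_exp_moment_general
    {Ω : Type*} [MeasurableSpace Ω] (μ : Measure Ω)
    (Y : Ω → ℝ)
    (f : ℝ → ℝ) (hfcont : ContinuousOn f (Set.Ici 0))
    (hdens : ∀ d : ℝ, 0 ≤ d →
      (μ {ω | d < Y ω}).toReal = ∫ y in Set.Ioi d, f y)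
    (hSpos : ∀ d : ℝ, 0 ≤ d → 0 < (μ {ω | d < Y ω}).toReal)
    (ℓ : ℝ)
    (hhaz : Filter.Tendsto (fun y : ℝ => f y / (μ {ω | y < Y ω}).toReal)
        Filter.atTop (nhds ℓ))
    (a : ℝ) (haℓ : a < ℓ) :
    Filter.Tendsto
      (fun d : ℝ => (∫ y in Set.Ioi d, Real.exp (a * y) * f y)
          / (Real.exp (a * d) * (μ {ω | d < Y ω}).toReal))
      Filter.atTop (nhds (ℓ / (ℓ - a))) := by
  have htail : ∀ᶠ d in atTop, (μ {ω | d < Y ω}).toReal = ∫ y in Ioi d, f y :=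
    (eventually_ge_atTop 0).mono hdens
  have hpos : ∀ᶠ d in atTop, 0 < ∫ y in Ioi d, f y := by
    filter_upwards [eventually_ge_atTop 0] with d hd
    exact hdens d hd ▸ hSpos d hd
  have hhaz' : Tendsto (fun d => f d / ∫ y in Ioi d, f y) atTop (𝓝 ℓ) :=
    hhaz.congr' (htail.mono fun d hd => by rw [hd])
  refine (tendsto_integral_exp_mul_div_of_hazard hfcont hpos hhaz' haℓ).congr' ?_
  filter_upwards [htail] with d hd
  rw [hd]

/-- The L'Hôpital limit in the proof of Proposition 4.4: if `Y ≥ 0` has a continuous density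
`f` on `[0,∞)` with everywhere positive survival function `S`, the hazard rate
`h(y) = f(y)/S(y)` tends to `ℓ > 0` at infinity, and `0 < a < ℓ` with `E[e^{aY}] < ∞`, then
`(∫_d^∞ e^{ay} f(y) dy)/(e^{ad} S(d)) → ℓ/(ℓ − a)` as `d → ∞`. -/
theorem hazard_rate_limit_conditional_exp_moment
    {Ω : Type*} [MeasurableSpace Ω] (μ : Measure Ω) [IsProbabilityMeasure μ]
    (Y : Ω → ℝ) (hYmeas : Measurable Y) (hYnonneg : ∀ ω, 0 ≤ Y ω)
    (f : ℝ → ℝ) (hfcont : ContinuousOn f (Set.Ici 0)) (hfnonneg : ∀ y, 0 ≤ f y)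
    (hdens : ∀ d : ℝ, 0 ≤ d →
      (μ {ω | d < Y ω}).toReal = ∫ y in Set.Ioi d, f y)
    (hSpos : ∀ d : ℝ, 0 ≤ d → 0 < (μ {ω | d < Y ω}).toReal)
    (ℓ : ℝ) (hℓ : 0 < ℓ)
    (hhaz : Filter.Tendsto (fun y : ℝ => f y / (μ {ω | y < Y ω}).toReal)
        Filter.atTop (nhds ℓ))
    (a : ℝ) (ha0 : 0 < a) (haℓ : a < ℓ)
    (hexp : Integrable (fun ω => Real.exp (a * Y ω)) μ) :
    Filter.Tendsto
      (fun d : ℝ => (∫ y in Set.Ioi d, Real.exp (a * y) * f y)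
          / (Real.exp (a * d) * (μ {ω | d < Y ω}).toReal))
      Filter.atTop (nhds (ℓ / (ℓ - a))) :=
  hazard_rate_limit_conditional_exp_moment_general μ Y f hfcont hdens hSpos ℓ hhaz a haℓ
end

section
/- Let Y be a nonnegative random variable with a continuous probability density function f on [0,∞) and survival function S(y) = P(Y > y) satisfying S(y) > 0 for all y ≥ 0. Suppose the hazard rate h(y) = f(y)/S(y) satisfies lim_{y→∞} h(y) = ℓ with ℓ > 0, and let a ∈ (0, ℓ) be such that E[e^{aY}] < ∞. Then sup_{d ≥ 0} E[e^{a(Y − d)} 1_{{Y > d}}] / S(d) < ∞. -/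
/-!
Fix `b ∈ (a, ℓ)`. Beyond some `M` the hazard rate exceeds `b`, so the survival function
`S(y) = ∫_y^∞ f` satisfies `S' = -f ≤ -b S` and Grönwall's inequality gives
`S(d + t) ≤ S(d) e^{-bt}` for `d > M`. By the layer-cake formula,
`E[e^{a(Y-d)}; Y > d] = S(d) + ∫_0^∞ a e^{at} S(d + t) dt ≤ S(d) b / (b - a)` for such `d`,
while for `0 ≤ d ≤ M` the ratio is at most `E[e^{aY}] / S(M)`.
-/

open MeasureTheory Real Filter Set Topology

theorem hasDerivAt_integral_Ioi_s15 {f : ℝ → ℝ} {c x : ℝ} (hcx : c < x)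
    (hint : IntegrableOn f (Ioi c)) (hf : ContinuousAt f x) :
    HasDerivAt (fun y => ∫ t in Ioi y, f t) (-f x) x := by
  have hsplit : (fun y => (∫ t in Ioi c, f t) - ∫ t in c..y, f t) =ᶠ[𝓝 x]
      fun y => ∫ t in Ioi y, f t := by
    filter_upwards [Ioi_mem_nhds hcx] with y hy
    rw [← intervalIntegral.integral_Ioi_sub_Ioi hint (le_of_lt hy), sub_sub_cancel]
  refine HasDerivAt.congr_of_eventuallyEq ?_ hsplit.symm
  refine (intervalIntegral.integral_hasDerivAt_right ?_ ?_ hf).const_sub _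
  · exact (intervalIntegrable_iff_integrableOn_Ioc_of_le hcx.le).2
      (hint.mono_set Ioc_subset_Ioi_self)
  · exact AEStronglyMeasurable.stronglyMeasurableAtFilter_of_mem hint.aestronglyMeasurable
      (Ioi_mem_nhds hcx)

theorem integral_Ioi_le_mul_exp_of_mul_le {f : ℝ → ℝ} {b M d t : ℝ}
    (hint : IntegrableOn f (Ioi M)) (hf : ContinuousOn f (Ioi M))
    (hmul_le : ∀ x, M < x → b * ∫ s in Ioi x, f s ≤ f x) (hd : M < d) (ht : 0 ≤ t) :
    ∫ s in Ioi (d + t), f s ≤ (∫ s in Ioi d, f s) * exp (-b * t) := by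
  have hderiv : ∀ x, M < x → HasDerivAt (fun y => ∫ s in Ioi y, f s) (-f x) x := fun x hx =>
    hasDerivAt_integral_Ioi_s15 hx hint (hf.continuousAt (Ioi_mem_nhds hx))
  have hgronwall := le_gronwallBound_of_liminf_deriv_right_le (f' := fun x => -f x)
    (δ := ∫ s in Ioi d, f s) (K := -b) (ε := 0)
    (fun x hx => (hderiv x (hd.trans_le hx.1)).continuousAt.continuousWithinAt)
    (fun x hx _ hr => (hderiv x (hd.trans_le hx.1)).hasDerivWithinAt.liminf_right_slope_le hr)
    le_rfl (fun x hx => by linarith [hmul_le x (hd.trans_le hx.1)]) (d + t) ⟨by linarith, le_rfl⟩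
  rwa [gronwallBound_ε0, add_sub_cancel_left] at hgronwall

theorem integral_mul_exp_mul (a x : ℝ) : ∫ t in 0..x, a * exp (a * t) = exp (a * x) - 1 := by
  rw [intervalIntegral.integral_eq_sub_of_hasDerivAt (f := fun t => exp (a * t))
    (fun t _ => by simpa [mul_comm] using ((hasDerivAt_id t).const_mul a).exp)
    ((by fun_prop : Continuous fun t => a * exp (a * t)).intervalIntegrable _ _)]
  simp

section ConditionalExpMoment

variable {Ω : Type*} [MeasurableSpace Ω] {μ : Measure Ω} {Y : Ω → ℝ}

theorem lintegral_exp_mul_sub_sub_one_eq (hY : Measurable Y) {a : ℝ} (ha : 0 ≤ a) (d : ℝ) :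
    ∫⁻ ω in {ω | d < Y ω}, ENNReal.ofReal (exp (a * (Y ω - d)) - 1) ∂μ
      = ∫⁻ t in Ioi 0, μ {ω | d + t < Y ω} * ENNReal.ofReal (a * exp (a * t)) := by
  have hs : MeasurableSet {ω | d < Y ω} := hY measurableSet_Ioi
  have hlayer := lintegral_comp_eq_lintegral_meas_lt_mul (μ.restrict {ω | d < Y ω})
    (f := fun ω => Y ω - d) (g := fun t => a * exp (a * t))
    (ae_restrict_of_forall_mem hs fun ω hω => sub_nonneg.2 (le_of_lt hω))
    (hY.sub_const d).aemeasurable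
    (fun t _ => (by fun_prop : Continuous fun t => a * exp (a * t)).intervalIntegrable 0 t)
    (Eventually.of_forall fun t => by positivity)
  simp only [integral_mul_exp_mul] at hlayer
  rw [hlayer]
  refine setLIntegral_congr_fun measurableSet_Ioi fun t (ht : 0 < t) => ?_
  rw [Measure.restrict_apply (measurableSet_lt measurable_const (hY.sub_const d))]
  congr 2
  ext ω
  change t < Y ω - d ∧ d < Y ω ↔ d + t < Y ω
  exact ⟨fun ⟨h, _⟩ => by linarith, fun h => ⟨by linarith, by linarith⟩⟩

theorem setIntegral_exp_mul_sub_le_integral_exp {a d : ℝ} (ha : 0 ≤ a) (hd : 0 ≤ d)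
    (hexp : Integrable (fun ω => exp (a * Y ω)) μ) (s : Set Ω) :
    ∫ ω in s, exp (a * (Y ω - d)) ∂μ ≤ ∫ ω, exp (a * Y ω) ∂μ := by
  have hle : ∀ ω, exp (a * (Y ω - d)) ≤ exp (a * Y ω) := fun ω => by
    gcongr; linarith
  calc ∫ ω in s, exp (a * (Y ω - d)) ∂μ ≤ ∫ ω in s, exp (a * Y ω) ∂μ :=
        integral_mono_of_nonneg (Eventually.of_forall fun ω => by positivity) hexp.integrableOn
          (Eventually.of_forall hle)
    _ ≤ ∫ ω, exp (a * Y ω) ∂μ :=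
        setIntegral_le_integral hexp (Eventually.of_forall fun ω => by positivity)

variable [IsFiniteMeasure μ]

theorem setIntegral_exp_mul_sub_eq (hY : Measurable Y) {a : ℝ} (ha : 0 ≤ a)
    (hexp : Integrable (fun ω => exp (a * Y ω)) μ) (d : ℝ) :
    ∫ ω in {ω | d < Y ω}, exp (a * (Y ω - d)) ∂μ = μ.real {ω | d < Y ω} +
      ∫ t in Ioi 0, μ.real {ω | d + t < Y ω} * (a * exp (a * t)) := by
  set s := {ω | d < Y ω}
  have hs : MeasurableSet s := hY measurableSet_Ioi
  have hint : IntegrableOn (fun ω => exp (a * (Y ω - d))) s μ := by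
    refine (hexp.const_mul (exp (-(a * d)))).integrableOn.congr_fun (fun ω _ => ?_) hs
    dsimp only
    rw [← exp_add]; ring_nf
  have hlhs : ∫ ω in s, (exp (a * (Y ω - d)) - 1) ∂μ
      = (∫⁻ ω in s, ENNReal.ofReal (exp (a * (Y ω - d)) - 1) ∂μ).toReal := by
    refine integral_eq_lintegral_of_nonneg_ae (ae_restrict_of_forall_mem hs fun ω hω => ?_)
      (hint.sub integrableOn_const).aestronglyMeasurable
    simp only [Pi.zero_apply, sub_nonneg, one_le_exp_iff]
    exact mul_nonneg ha (sub_nonneg.2 (le_of_lt hω))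
  have hrhs : ∫ t in Ioi 0, μ.real {ω | d + t < Y ω} * (a * exp (a * t))
      = (∫⁻ t in Ioi 0, μ {ω | d + t < Y ω} * ENNReal.ofReal (a * exp (a * t))).toReal := by
    rw [integral_eq_lintegral_of_nonneg_ae (Eventually.of_forall fun t => by positivity)]
    · congr 1
      refine setLIntegral_congr_fun measurableSet_Ioi fun t _ => ?_
      rw [ENNReal.ofReal_mul measureReal_nonneg, ofReal_measureReal]
    · refine (Measurable.mul ?_ (by fun_prop)).aestronglyMeasurable
      exact Antitone.measurable fun t u htu =>
        measureReal_mono fun ω (h : d + u < Y ω) => show d + t < Y ω by linarith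
  rw [hrhs, ← lintegral_exp_mul_sub_sub_one_eq hY ha, ← hlhs,
    integral_sub hint integrableOn_const, setIntegral_const, smul_eq_mul, mul_one]
  ring

theorem setIntegral_exp_mul_sub_le_of_tail_le (hY : Measurable Y) {a b d : ℝ} (ha : 0 ≤ a)
    (hab : a < b) (hexp : Integrable (fun ω => exp (a * Y ω)) μ)
    (htail : ∀ t, 0 < t →
      μ.real {ω | d + t < Y ω} ≤ μ.real {ω | d < Y ω} * exp (-b * t)) :
    ∫ ω in {ω | d < Y ω}, exp (a * (Y ω - d)) ∂μ ≤
      μ.real {ω | d < Y ω} * (b / (b - a)) := by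
  set S := μ.real {ω | d < Y ω}
  have hmoment : ∫ t in Ioi 0, μ.real {ω | d + t < Y ω} * (a * exp (a * t))
      ≤ ∫ t in Ioi 0, S * a * exp ((a - b) * t) := by
    refine integral_mono_of_nonneg (Eventually.of_forall fun t => by positivity)
      ((integrableOn_exp_mul_Ioi (by linarith) 0).const_mul _)
      (ae_restrict_of_forall_mem measurableSet_Ioi fun t (ht : 0 < t) => ?_)
    calc μ.real {ω | d + t < Y ω} * (a * exp (a * t))
        ≤ S * exp (-b * t) * (a * exp (a * t)) := by gcongr; exact htail t ht
      _ = S * a * exp ((a - b) * t) := by rw [sub_mul, sub_eq_add_neg, exp_add]; ring_nf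
  rw [integral_const_mul, integral_exp_mul_Ioi (by linarith), mul_zero, exp_zero] at hmoment
  rw [setIntegral_exp_mul_sub_eq hY ha hexp]
  calc S + ∫ t in Ioi 0, μ.real {ω | d + t < Y ω} * (a * exp (a * t))
      ≤ S + S * a * (-1 / (a - b)) := by gcongr
    _ = S * (b / (b - a)) := by
      rw [show a - b = -(b - a) by ring]
      field_simp [(sub_pos.2 hab).ne']
      ring

end ConditionalExpMoment

theorem hazard_rate_conditional_exp_moment_bdd_general
    {Ω : Type*} [MeasurableSpace Ω] (μ : Measure Ω) [IsProbabilityMeasure μ]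
    (Y : Ω → ℝ) (hYmeas : Measurable Y)
    (f : ℝ → ℝ) (hfcont : ContinuousOn f (Set.Ici 0))
    (hdens : ∀ d : ℝ, 0 ≤ d →
      (μ {ω | d < Y ω}).toReal = ∫ y in Set.Ioi d, f y)
    (hSpos : ∀ d : ℝ, 0 ≤ d → 0 < (μ {ω | d < Y ω}).toReal)
    (ℓ : ℝ)
    (hhaz : Filter.Tendsto (fun y : ℝ => f y / (μ {ω | y < Y ω}).toReal)
        Filter.atTop (nhds ℓ))
    (a : ℝ) (ha0 : 0 < a) (haℓ : a < ℓ)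
    (hexp : Integrable (fun ω => Real.exp (a * Y ω)) μ) :
    BddAbove ((fun d : ℝ =>
        (∫ ω in {ω | d < Y ω}, Real.exp (a * (Y ω - d)) ∂μ)
          / (μ {ω | d < Y ω}).toReal) '' Set.Ici 0) := by
  simp only [← measureReal_def] at hdens hSpos hhaz ⊢
  obtain ⟨b, hab, hbℓ⟩ := exists_between haℓ
  obtain ⟨M, hM0, hMhaz⟩ :
      ∃ M, 0 ≤ M ∧ ∀ y, M < y → b * μ.real {ω | y < Y ω} < f y := by
    obtain ⟨M, hM⟩ := eventually_atTop.1 (hhaz.eventually (lt_mem_nhds hbℓ))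
    refine ⟨max M 0, le_max_right M 0, fun y hy => ?_⟩
    have hy0 : 0 ≤ y := (le_max_right M 0).trans hy.le
    exact (lt_div_iff₀ (hSpos y hy0)).1 (hM y ((le_max_left M 0).trans hy.le))
  have hint : IntegrableOn f (Ioi 0) :=
    Integrable.of_integral_ne_zero (hdens 0 le_rfl ▸ (hSpos 0 le_rfl).ne')
  have htail : ∀ d, M < d → ∀ t, 0 < t →
      μ.real {ω | d + t < Y ω} ≤ μ.real {ω | d < Y ω} * exp (-b * t) := by
    intro d hMd t ht
    have hd0 : 0 ≤ d := hM0.trans hMd.le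
    rw [hdens d hd0, hdens (d + t) (by linarith)]
    refine integral_Ioi_le_mul_exp_of_mul_le (hint.mono_set (Ioi_subset_Ioi hM0))
      (hfcont.mono fun x hx => hM0.trans (le_of_lt hx)) (fun x hx => ?_) hMd ht.le
    rw [← hdens x (hM0.trans hx.le)]
    exact (hMhaz x hx).le
  refine ⟨max ((∫ ω, exp (a * Y ω) ∂μ) / μ.real {ω | M < Y ω}) (b / (b - a)), ?_⟩
  rintro _ ⟨d, hd : 0 ≤ d, rfl⟩
  rcases le_or_gt d M with hdM | hMd
  · exact le_max_of_le_left (div_le_div₀ (integral_nonneg fun ω => (exp_pos _).le)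
      (setIntegral_exp_mul_sub_le_integral_exp ha0.le hd hexp _) (hSpos M hM0)
      (measureReal_mono fun ω (h : M < Y ω) => show d < Y ω by linarith))
  · refine le_max_of_le_right ((div_le_iff₀ (hSpos d hd)).2 ?_)
    rw [mul_comm]
    exact setIntegral_exp_mul_sub_le_of_tail_le hYmeas ha0.le hab hexp (htail d hMd)

/-- Proposition 4.4 (case `ℓ > 0`): if `Y ≥ 0` has a continuous density `f` on `[0,∞)` with
everywhere positive survival function `S`, the hazard rate `h(y) = f(y)/S(y)` tends to
`ℓ > 0` at infinity, and `0 < a < ℓ` with `E[e^{aY}] < ∞`, then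
`sup_{d ≥ 0} E[e^{a(Y−d)} 1_{Y>d}]/S(d) < ∞`. -/
theorem hazard_rate_conditional_exp_moment_bdd
    {Ω : Type*} [MeasurableSpace Ω] (μ : Measure Ω) [IsProbabilityMeasure μ]
    (Y : Ω → ℝ) (hYmeas : Measurable Y) (hYnonneg : ∀ ω, 0 ≤ Y ω)
    (f : ℝ → ℝ) (hfcont : ContinuousOn f (Set.Ici 0)) (hfnonneg : ∀ y, 0 ≤ f y)
    (hdens : ∀ d : ℝ, 0 ≤ d →
      (μ {ω | d < Y ω}).toReal = ∫ y in Set.Ioi d, f y)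
    (hSpos : ∀ d : ℝ, 0 ≤ d → 0 < (μ {ω | d < Y ω}).toReal)
    (ℓ : ℝ) (hℓ : 0 < ℓ)
    (hhaz : Filter.Tendsto (fun y : ℝ => f y / (μ {ω | y < Y ω}).toReal)
        Filter.atTop (nhds ℓ))
    (a : ℝ) (ha0 : 0 < a) (haℓ : a < ℓ)
    (hexp : Integrable (fun ω => Real.exp (a * Y ω)) μ) :
    BddAbove ((fun d : ℝ =>
        (∫ ω in {ω | d < Y ω}, Real.exp (a * (Y ω - d)) ∂μ)
          / (μ {ω | d < Y ω}).toReal) '' Set.Ici 0) :=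
  hazard_rate_conditional_exp_moment_bdd_general μ Y hYmeas f hfcont hdens hSpos ℓ hhaz a ha0 haℓ
    hexp
end

section
/- Let ρ > c > 0 and b > 0. Then for all m ≥ 0: 0 ≤ (1 − e^{−ρm})^b − (1 − e^{−(ρ−c)m})^b ≤ 1 − (1 − c/ρ)^b ≤ max(b, 1) · c/ρ. -/
open Real Set

/-! Write `x = 1 - e^{-ρm}` and `y = 1 - e^{-(ρ-c)m}`, so `0 ≤ y ≤ x ≤ 1`. Convexity of `exp`
gives `y ≥ q x` with `q = 1 - c/ρ`, hence `x^b - y^b ≤ (1 - q^b) x^b ≤ 1 - q^b`. The last bound is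
Bernoulli's inequality for `b ≥ 1` and `1 - t ≤ (1 - t)^b` for `b ≤ 1`. -/

theorem mul_one_sub_exp_neg_le_one_sub_exp_neg_mul {θ : ℝ} (hθ₀ : 0 ≤ θ) (hθ₁ : θ ≤ 1)
    (u : ℝ) : θ * (1 - exp (-u)) ≤ 1 - exp (-(θ * u)) := by
  have h := convexOn_exp.2 (mem_univ (-u)) (mem_univ 0) hθ₀ (sub_nonneg.2 hθ₁)
    (add_sub_cancel θ 1)
  simp only [smul_eq_mul, mul_zero, add_zero, exp_zero, mul_one, mul_neg] at h
  linarith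

theorem rpow_sub_rpow_le_one_sub_rpow {q x y b : ℝ} (hq₀ : 0 ≤ q) (hq₁ : q ≤ 1) (hx₀ : 0 ≤ x)
    (hx₁ : x ≤ 1) (hqxy : q * x ≤ y) (hb : 0 ≤ b) : x ^ b - y ^ b ≤ 1 - q ^ b := by
  have hy : q ^ b * x ^ b ≤ y ^ b := by
    rw [← mul_rpow hq₀ hx₀]
    exact rpow_le_rpow (mul_nonneg hq₀ hx₀) hqxy hb
  have hxb : x ^ b ≤ 1 := rpow_le_one hx₀ hx₁ hb
  have hqb : q ^ b ≤ 1 := rpow_le_one hq₀ hq₁ hb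
  nlinarith

theorem one_sub_rpow_one_sub_le_max_mul {t : ℝ} (ht₀ : 0 ≤ t) (ht₁ : t ≤ 1) (b : ℝ) :
    1 - (1 - t) ^ b ≤ max b 1 * t := by
  rcases le_total 1 b with hb | hb
  · have h := one_add_mul_self_le_rpow_one_add (s := -t) (by linarith) hb
    rw [← sub_eq_add_neg] at h
    rw [max_eq_left hb]
    linarith
  · have h := self_le_rpow_of_le_one (sub_nonneg.2 ht₁) (sub_le_self 1 ht₀) hb
    rw [max_eq_right hb]
    linarith

/-- Bound on the difference of boundary factors: for `ρ > c > 0` and `b > 0`, for all `m ≥ 0`,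
`0 ≤ (1 − e^{−ρm})^b − (1 − e^{−(ρ−c)m})^b ≤ 1 − (1 − c/ρ)^b ≤ max(b,1) · c/ρ`.
(Real exponents are `Real.rpow`.) -/
theorem boundary_factor_difference_bound
    (ρ c b : ℝ) (hc : 0 < c) (hcρ : c < ρ) (hb : 0 < b) :
    ∀ m : ℝ, 0 ≤ m →
      0 ≤ (1 - Real.exp (-ρ * m)) ^ b - (1 - Real.exp (-(ρ - c) * m)) ^ b ∧
      (1 - Real.exp (-ρ * m)) ^ b - (1 - Real.exp (-(ρ - c) * m)) ^ b
        ≤ 1 - (1 - c / ρ) ^ b ∧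
      1 - (1 - c / ρ) ^ b ≤ max b 1 * (c / ρ) := by
  intro m hm
  have hρ : 0 < ρ := hc.trans hcρ
  have ht₀ : 0 ≤ c / ρ := div_nonneg hc.le hρ.le
  have ht₁ : c / ρ ≤ 1 := (div_le_one hρ).2 hcρ.le
  have hx₁ : 1 - exp (-ρ * m) ≤ 1 := sub_le_self 1 (exp_pos _).le
  have hyx : 1 - exp (-(ρ - c) * m) ≤ 1 - exp (-ρ * m) :=
    sub_le_sub_left (exp_le_exp.2 (by nlinarith)) 1
  have hqxy : (1 - c / ρ) * (1 - exp (-ρ * m)) ≤ 1 - exp (-(ρ - c) * m) := by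
    have h := mul_one_sub_exp_neg_le_one_sub_exp_neg_mul (sub_nonneg.2 ht₁)
      (sub_le_self 1 ht₀) (ρ * m)
    have hθ : (1 - c / ρ) * (ρ * m) = (ρ - c) * m := by field_simp
    rwa [hθ, ← neg_mul, ← neg_mul] at h
  have hx₀ : 0 ≤ 1 - exp (-ρ * m) :=
    sub_nonneg.2 (exp_le_one_iff.2 (by nlinarith))
  have hy₀ : 0 ≤ 1 - exp (-(ρ - c) * m) :=
    (mul_nonneg (sub_nonneg.2 ht₁) hx₀).trans hqxy
  exact ⟨sub_nonneg.2 (rpow_le_rpow hy₀ hyx hb.le),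
    rpow_sub_rpow_le_one_sub_rpow (sub_nonneg.2 ht₁) (sub_le_self 1 ht₀) hx₀ hx₁ hqxy hb.le,
    one_sub_rpow_one_sub_le_max_mul ht₀ ht₁ b⟩
end
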